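/- arXiv:2011.08322 — 5 statements merged into one kernel-verified Lean document; each statement's English description precedes it below -/
import Mathlib

section
/- Let a, b > 0 be real numbers. Then, as the real variable x → +∞, one has Γ(x+a)/Γ(x+b) · x^{b−a} = 1 + (a−b)(a+b−1)/(2x) + (a−b)(a−b−1)(3(a+b−1)² − a + b − 1)/(24x²) + O(x^{−3}); that is, the function x ↦ Γ(x+a)/Γ(x+b) · x^{b−a} − 1 − (a−b)(a+b−1)/(2x) − (a−b)(a−b−1)(3(a+b−1)² − a + b − 1)/(24x²) is O(x^{−3}) as x → +∞. -/
open Filter Asymptotics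

section Aux

open Real Finset Topology

private lemma log_taylor3 {u : ℝ} (h : |u| ≤ 1/2) :
    |Real.log (1+u) - (u - u^2/2 + u^3/3)| ≤ 2*|u|^4 := by
  have h1 : |(-u)| < 1 := by rw [abs_neg]; linarith
  have h0 := Real.abs_log_sub_add_sum_range_le h1 3
  have hsum : ∑ i ∈ Finset.range 3, (-u) ^ (i + 1) / ((i : ℝ) + 1)
      = -u + u^2/2 - u^3/3 := by
    simp [Finset.sum_range_succ]; ring
  rw [hsum] at h0
  have h2 : -u + u ^ 2 / 2 - u ^ 3 / 3 + Real.log (1 - -u)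
      = Real.log (1 + u) - (u - u^2/2 + u^3/3) := by
    rw [sub_neg_eq_add]; ring
  rw [h2, abs_neg] at h0
  refine h0.trans ?_
  rw [div_le_iff₀ (by linarith [abs_nonneg u])]
  have h3 : (0:ℝ) ≤ |u|^4 := pow_nonneg (abs_nonneg u) 4
  have h4 : |u|^(3+1) = |u|^4 := by norm_num
  rw [h4]
  nlinarith [mul_nonneg h3 (by linarith : (0:ℝ) ≤ 1/2 - |u|)]

private lemma wendel_unit {s : ℝ} (h0 : 0 ≤ s) (h1 : s ≤ 1) :
    Tendsto (fun x : ℝ => log (Gamma (x+s)) - log (Gamma x) - s * log x) atTop (𝓝 0) := by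
  have hC := Real.convexOn_log_Gamma
  have hlim : Tendsto (fun x : ℝ => -((1-s) * Real.log (1 + s/x))) atTop (𝓝 0) := by
    have h2 : Tendsto (fun x : ℝ => 1 + s/x) atTop (𝓝 1) := by
      simpa using (tendsto_const_nhds (α := ℝ) (x := (1:ℝ))).add
        (Tendsto.div_atTop (tendsto_const_nhds (x := s)) tendsto_id)
    have hl : Tendsto (fun x : ℝ => Real.log (1 + s/x)) atTop (𝓝 0) := by
      have := (Real.continuousAt_log (by norm_num : (1:ℝ) ≠ 0)).tendsto.comp h2
      simpa [Function.comp_def] using this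
    simpa using (hl.const_mul (1-s)).neg
  refine tendsto_of_tendsto_of_tendsto_of_le_of_le' hlim tendsto_const_nhds ?_ ?_
  · filter_upwards [eventually_ge_atTop (1:ℝ)] with x hx
    have hx0 : (0:ℝ) < x := by linarith
    have hxs : (0:ℝ) < x + s := by linarith
    have key := hC.2 (Set.mem_Ioi.2 hxs) (Set.mem_Ioi.2 (by linarith : (0:ℝ) < x+s+1))
      h0 (by linarith : (0:ℝ) ≤ 1 - s) (by ring)
    simp only [smul_eq_mul, Function.comp_apply] at key
    have e1 : s*(x+s) + (1-s)*(x+s+1) = x + 1 := by ring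
    rw [e1] at key
    have e2 : Real.log (Real.Gamma (x+s+1)) = Real.log (x+s) + Real.log (Real.Gamma (x+s)) := by
      rw [Real.Gamma_add_one (ne_of_gt hxs),
        Real.log_mul (ne_of_gt hxs) (ne_of_gt (Real.Gamma_pos_of_pos hxs))]
    have e3 : Real.log (Real.Gamma (x+1)) = Real.log x + Real.log (Real.Gamma x) := by
      rw [Real.Gamma_add_one (ne_of_gt hx0),
        Real.log_mul (ne_of_gt hx0) (ne_of_gt (Real.Gamma_pos_of_pos hx0))]
    rw [e2, e3] at key
    have e4 : Real.log (1 + s/x) = Real.log (x+s) - Real.log x := by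
      rw [show (1 : ℝ) + s/x = (x+s)/x by field_simp,
        Real.log_div (ne_of_gt hxs) (ne_of_gt hx0)]
    rw [e4]
    nlinarith [key]
  · filter_upwards [eventually_ge_atTop (1:ℝ)] with x hx
    have hx0 : (0:ℝ) < x := by linarith
    have key := hC.2 (Set.mem_Ioi.2 hx0) (Set.mem_Ioi.2 (by linarith : (0:ℝ) < x+1))
      (by linarith : (0:ℝ) ≤ 1 - s) h0 (by ring)
    simp only [smul_eq_mul, Function.comp_apply] at key
    have e1 : (1-s)*x + s*(x+1) = x + s := by ring
    rw [e1] at key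
    have e3 : Real.log (Real.Gamma (x+1)) = Real.log x + Real.log (Real.Gamma x) := by
      rw [Real.Gamma_add_one (ne_of_gt hx0),
        Real.log_mul (ne_of_gt hx0) (ne_of_gt (Real.Gamma_pos_of_pos hx0))]
    rw [e3] at key
    nlinarith [key]

private lemma log_ratio_tendsto (c : ℝ) :
    Tendsto (fun x : ℝ => Real.log ((x+c)/x)) atTop (𝓝 0) := by
  have h2 : Tendsto (fun x : ℝ => 1 + c/x) atTop (𝓝 1) := by
    simpa using (tendsto_const_nhds (α := ℝ) (x := (1:ℝ))).add
      (Tendsto.div_atTop (tendsto_const_nhds (x := c)) tendsto_id)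
  have hl : Tendsto (fun x : ℝ => Real.log (1 + c/x)) atTop (𝓝 0) := by
    have := (Real.continuousAt_log (by norm_num : (1:ℝ) ≠ 0)).tendsto.comp h2
    simpa [Function.comp_def] using this
  apply hl.congr'
  filter_upwards [eventually_ge_atTop (1:ℝ)] with x hx
  have hx0 : x ≠ 0 := by positivity
  field_simp

private lemma wendel_nat (n : ℕ) : ∀ {s : ℝ}, 0 ≤ s → s ≤ 1 →
    Tendsto (fun x : ℝ => log (Gamma (x+(s+n))) - log (Gamma x) - (s+n) * log x)
      atTop (𝓝 0) := by
  induction n with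
  | zero => intro s h0 h1; simpa using wendel_unit h0 h1
  | succ n ih =>
    intro s h0 h1
    have prev := (ih h0 h1).add (log_ratio_tendsto (s+n))
    rw [add_zero] at prev
    apply prev.congr'
    filter_upwards [eventually_ge_atTop (1:ℝ)] with x hx
    have hx0 : (0:ℝ) < x := by linarith
    have hsn : (0:ℝ) < x + (s + n) := by positivity
    have e1 : x + (s + ((n:ℝ)+1)) = (x + (s + n)) + 1 := by ring
    have e2 : Real.log (Real.Gamma ((x + (s+n)) + 1))
        = Real.log (x+(s+n)) + Real.log (Real.Gamma (x+(s+n))) := by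
      rw [Real.Gamma_add_one (ne_of_gt hsn),
        Real.log_mul (ne_of_gt hsn) (ne_of_gt (Real.Gamma_pos_of_pos hsn))]
    have e3 : Real.log ((x + (s+n))/x) = Real.log (x+(s+n)) - Real.log x :=
      Real.log_div (ne_of_gt hsn) (ne_of_gt hx0)
    push_cast
    rw [e1, e2, e3]
    ring

private lemma wendel {a : ℝ} (ha : 0 < a) :
    Tendsto (fun x : ℝ => log (Gamma (x+a)) - log (Gamma x) - a * log x) atTop (𝓝 0) := by
  set n : ℕ := ⌈a⌉₊ - 1 with hn
  have hceil : 1 ≤ ⌈a⌉₊ := Nat.one_le_iff_ne_zero.2 (by positivity)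
  have hnc : (n:ℝ) = (⌈a⌉₊ : ℝ) - 1 := by
    rw [hn]; push_cast [Nat.cast_sub hceil]; ring
  have hle : a ≤ (⌈a⌉₊:ℝ) := Nat.le_ceil a
  have hlt : (⌈a⌉₊:ℝ) < a + 1 := by
    exact_mod_cast Nat.ceil_lt_add_one ha.le
  have h0 : 0 ≤ a - n := by rw [hnc]; linarith
  have h1 : a - n ≤ 1 := by rw [hnc]; linarith
  have key := wendel_nat n h0 h1
  have hsn : a - (n:ℝ) + n = a := by ring
  rw [hsn] at key
  exact key

private lemma tail_bound (F : ℝ → ℝ) (K x₀ : ℝ) (hK : 0 ≤ K) (hx₀ : 2 ≤ x₀)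
    (hr : ∀ y : ℝ, x₀ ≤ y → |F (y+1) - F y| ≤ K / y^4)
    (hlim : ∀ y : ℝ, x₀ ≤ y → Tendsto (fun n : ℕ => F (y + n)) atTop (𝓝 0)) :
    ∀ y : ℝ, x₀ ≤ y → |F y| ≤ 2*K / y^3 := by
  intro y hy
  have hy2 : (2:ℝ) ≤ y := le_trans hx₀ hy
  have hy0 : (0:ℝ) < y := by linarith
  have key : ∀ N : ℕ, |F (y + N) - F y| ≤ 2*K/y^3 := by
    intro N
    have tele : F (y + N) - F y = ∑ k ∈ range N, (F (y + k + 1) - F (y + k)) := by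
      have h := Finset.sum_range_sub (fun k : ℕ => F (y + k)) N
      push_cast at h
      simp only [← add_assoc, add_zero] at h
      exact h.symm
    rw [tele]
    have step : ∀ k ∈ range N,
        |F (y + k + 1) - F (y + k)| ≤ (K/y^2) * (1/(y+k-1) - 1/(y+k)) := by
      intro k _
      have hk0 : (0:ℝ) ≤ (k:ℝ) := Nat.cast_nonneg k
      have hyk : x₀ ≤ y + k := by linarith
      have h1 := hr (y + k) hyk
      refine h1.trans ?_
      have hyk1 : (0:ℝ) < y + k - 1 := by linarith
      have hyk2 : (0:ℝ) < y + k := by linarith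
      have e : 1/(y+k-1) - 1/(y+k) = 1/((y+k-1)*(y+k)) := by
        field_simp
        ring
      rw [e, div_mul_div_comm, mul_one]
      have hden : y^2 * ((y+k-1)*(y+k)) ≤ (y+k)^4 := by
        have hA : y^2 ≤ (y+k)^2 := by nlinarith
        have hB : (y+k-1)*(y+k) ≤ (y+k)^2 := by nlinarith
        calc y^2 * ((y+k-1)*(y+k)) ≤ (y+k)^2 * ((y+k)^2) :=
              mul_le_mul hA hB (by positivity) (by positivity)
          _ = (y+k)^4 := by ring
      exact div_le_div_of_nonneg_left hK (by positivity) hden |>.trans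
        (le_of_eq (by ring_nf))
    calc |∑ k ∈ range N, (F (y + k + 1) - F (y + k))|
        ≤ ∑ k ∈ range N, |F (y + k + 1) - F (y + k)| := Finset.abs_sum_le_sum_abs _ _
      _ ≤ ∑ k ∈ range N, (K/y^2) * (1/(y+k-1) - 1/(y+k)) := Finset.sum_le_sum step
      _ = (K/y^2) * ∑ k ∈ range N, (1/(y+k-1) - 1/(y+k)) := by rw [Finset.mul_sum]
      _ = (K/y^2) * (1/(y-1) - 1/(y+N-1)) := by
          congr 1
          have h := Finset.sum_range_sub' (fun k : ℕ => 1/(y+k-1)) N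
          push_cast at h
          simp only [add_zero] at h
          rw [← h]
          apply Finset.sum_congr rfl
          intro k _
          ring
      _ ≤ 2*K/y^3 := by
          have hN : (0:ℝ) ≤ (N:ℝ) := Nat.cast_nonneg N
          have h1 : (0:ℝ) < y - 1 := by linarith
          have h2 : (0:ℝ) < y + N - 1 := by linarith
          have h3 : 1/(y-1) - 1/(y+N-1) ≤ 2/y := by
            have h4 : 1/(y-1) ≤ 2/y := by
              rw [div_le_div_iff₀ h1 hy0]; linarith
            have h5 : (0:ℝ) ≤ 1/(y+N-1) := by positivity
            linarith
          calc (K/y^2) * (1/(y-1) - 1/(y+N-1)) ≤ (K/y^2) * (2/y) := by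
                apply mul_le_mul_of_nonneg_left h3 (by positivity)
            _ = 2*K/y^3 := by ring
  have hlimy := ((hlim y hy).sub_const (F y)).abs
  simp only [zero_sub, abs_neg] at hlimy
  exact le_of_tendsto hlimy (Eventually.of_forall key)

end Aux

open Topology

set_option maxHeartbeats 2000000 in
/-- Asymptotic expansion of `Γ(x+a)/Γ(x+b) · x^(b-a)` up to order `x⁻³`. -/
theorem gamma_ratio_asymptotic (a b : ℝ) (ha : 0 < a) (hb : 0 < b) :
    (fun x : ℝ =>
        Real.Gamma (x + a) / Real.Gamma (x + b) * x ^ (b - a)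
          - 1 - (a - b) * (a + b - 1) / (2 * x)
          - (a - b) * (a - b - 1) * (3 * (a + b - 1) ^ 2 - a + b - 1) / (24 * x ^ 2))
      =O[atTop] fun x : ℝ => x ^ (-3 : ℝ) := by
  set q1 : ℝ := (a^2 - b^2 - (a-b))/2 with hq1
  set q2 : ℝ := (q1 - (a^3 - b^3 - (a-b))/3)/2 with hq2
  set L : ℝ → ℝ := fun x => q1/x + q2/x^2 with hLdef
  set g : ℝ → ℝ := fun x =>
    Real.log (Real.Gamma (x+a)) - Real.log (Real.Gamma (x+b)) - (a-b) * Real.log x with hgdef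
  set E : ℝ → ℝ := fun x => g x - L x with hEdef
  set K : ℝ := 2*a^4 + 2*b^4 + 2*|a-b| + |q1| + 4*|q2| with hKdef
  have hK0 : 0 ≤ K := by rw [hKdef]; positivity
  set x0 : ℝ := max 2 (max (2*a) (2*b)) with hx0def
  have hx02 : (2:ℝ) ≤ x0 := le_max_left _ _
  -- step bound
  have hstep : ∀ y : ℝ, x0 ≤ y → |E (y+1) - E y| ≤ K / y^4 := by
    intro y hy
    have hy2 : (2:ℝ) ≤ y := le_trans hx02 hy
    have hya : 2*a ≤ y := le_trans (le_trans (le_max_left _ _) (le_max_right _ _)) hy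
    have hyb : 2*b ≤ y := le_trans (le_trans (le_max_right _ _) (le_max_right _ _)) hy
    have hy0 : (0:ℝ) < y := by linarith
    have hy1 : (0:ℝ) < y + 1 := by linarith
    have hya0 : (0:ℝ) < y + a := by linarith
    have hyb0 : (0:ℝ) < y + b := by linarith
    -- step of g
    have ega : Real.log (Real.Gamma (y+1+a)) = Real.log (y+a) + Real.log (Real.Gamma (y+a)) := by
      rw [show y+1+a = (y+a)+1 by ring, Real.Gamma_add_one (ne_of_gt hya0),
        Real.log_mul (ne_of_gt hya0) (ne_of_gt (Real.Gamma_pos_of_pos hya0))]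
    have egb : Real.log (Real.Gamma (y+1+b)) = Real.log (y+b) + Real.log (Real.Gamma (y+b)) := by
      rw [show y+1+b = (y+b)+1 by ring, Real.Gamma_add_one (ne_of_gt hyb0),
        Real.log_mul (ne_of_gt hyb0) (ne_of_gt (Real.Gamma_pos_of_pos hyb0))]
    have l1 : Real.log (1+a/y) = Real.log (y+a) - Real.log y := by
      rw [show (1:ℝ)+a/y = (y+a)/y by field_simp,
        Real.log_div (ne_of_gt hya0) (ne_of_gt hy0)]
    have l2 : Real.log (1+b/y) = Real.log (y+b) - Real.log y := by
      rw [show (1:ℝ)+b/y = (y+b)/y by field_simp,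
        Real.log_div (ne_of_gt hyb0) (ne_of_gt hy0)]
    have l3 : Real.log (1+1/y) = Real.log (y+1) - Real.log y := by
      rw [show (1:ℝ)+1/y = (y+1)/y by field_simp,
        Real.log_div (ne_of_gt hy1) (ne_of_gt hy0)]
    have hgstep : g (y+1) - g y
        = Real.log (1+a/y) - Real.log (1+b/y) - (a-b) * Real.log (1+1/y) := by
      simp only [hgdef]
      rw [ega, egb, l1, l2, l3]
      ring
    -- rational identity
    have hW : (a/y - (a/y)^2/2 + (a/y)^3/3) - (b/y - (b/y)^2/2 + (b/y)^3/3)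
        - (a-b) * (1/y - (1/y)^2/2 + (1/y)^3/3) - (L (y+1) - L y)
        = q1*(1/(y^3*(y+1))) - q2*((3*y+2)/(y^3*(y+1)^2)) := by
      simp only [hLdef, hq2, hq1]
      field_simp
      ring
    have keyid : E (y+1) - E y =
        (Real.log (1+a/y) - (a/y - (a/y)^2/2 + (a/y)^3/3))
        - (Real.log (1+b/y) - (b/y - (b/y)^2/2 + (b/y)^3/3))
        - (a-b) * (Real.log (1+1/y) - (1/y - (1/y)^2/2 + (1/y)^3/3))
        + (q1*(1/(y^3*(y+1))) - q2*((3*y+2)/(y^3*(y+1)^2))) := by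
      have e0 : E (y+1) - E y = (g (y+1) - g y) - (L (y+1) - L y) := by
        simp only [hEdef]; ring
      rw [e0, hgstep]
      linear_combination hW
    rw [keyid]
    -- bounds on log residues
    have ba : |Real.log (1+a/y) - (a/y - (a/y)^2/2 + (a/y)^3/3)| ≤ 2*a^4/y^4 := by
      have hu : |a/y| ≤ 1/2 := by
        rw [abs_of_nonneg (by positivity)]
        rw [div_le_div_iff₀ hy0 (by norm_num)]; linarith
      refine (log_taylor3 hu).trans (le_of_eq ?_)
      rw [abs_of_nonneg (by positivity : (0:ℝ) ≤ a/y), div_pow]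
      ring
    have bb : |Real.log (1+b/y) - (b/y - (b/y)^2/2 + (b/y)^3/3)| ≤ 2*b^4/y^4 := by
      have hu : |b/y| ≤ 1/2 := by
        rw [abs_of_nonneg (by positivity)]
        rw [div_le_div_iff₀ hy0 (by norm_num)]; linarith
      refine (log_taylor3 hu).trans (le_of_eq ?_)
      rw [abs_of_nonneg (by positivity : (0:ℝ) ≤ b/y), div_pow]
      ring
    have bc : |Real.log (1+1/y) - (1/y - (1/y)^2/2 + (1/y)^3/3)| ≤ 2/y^4 := by
      have hu : |1/y| ≤ 1/2 := by
        rw [abs_of_nonneg (by positivity)]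
        rw [div_le_div_iff₀ hy0 (by norm_num)]; linarith
      refine (log_taylor3 hu).trans (le_of_eq ?_)
      rw [abs_of_nonneg (by positivity : (0:ℝ) ≤ 1/y), div_pow, one_pow]
      ring
    -- bounds on rational remainder
    have be1 : (1:ℝ)/(y^3*(y+1)) ≤ 1/y^4 := by
      rw [div_le_div_iff₀ (by positivity) (by positivity)]
      nlinarith
    have be2 : (3*y+2)/(y^3*(y+1)^2) ≤ 4/y^4 := by
      rw [div_le_div_iff₀ (by positivity) (by positivity)]
      nlinarith [pow_nonneg hy0.le 5, pow_nonneg hy0.le 4, pow_nonneg hy0.le 3]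
    have be1' : (0:ℝ) ≤ 1/(y^3*(y+1)) := by positivity
    have be2' : (0:ℝ) ≤ (3*y+2)/(y^3*(y+1)^2) := by positivity
    set A := Real.log (1+a/y) - (a/y - (a/y)^2/2 + (a/y)^3/3) with hA
    set B := Real.log (1+b/y) - (b/y - (b/y)^2/2 + (b/y)^3/3) with hB
    set Cc := Real.log (1+1/y) - (1/y - (1/y)^2/2 + (1/y)^3/3) with hCc
    have tri : |A - B - (a-b)*Cc + (q1*(1/(y^3*(y+1))) - q2*((3*y+2)/(y^3*(y+1)^2)))|
        ≤ |A| + |B| + |a - b| * |Cc|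
          + (|q1| * (1/(y^3*(y+1))) + |q2| * ((3*y+2)/(y^3*(y+1)^2))) := by
      have t1 := abs_add_le (A - B - (a-b)*Cc)
        (q1*(1/(y^3*(y+1))) - q2*((3*y+2)/(y^3*(y+1)^2)))
      have t2 := abs_sub (A - B) ((a-b)*Cc)
      have t3 := abs_sub A B
      have t4 := abs_sub (q1*(1/(y^3*(y+1)))) (q2*((3*y+2)/(y^3*(y+1)^2)))
      rw [abs_mul] at t2
      rw [abs_mul, abs_mul, abs_of_nonneg be1', abs_of_nonneg be2'] at t4
      linarith
    refine tri.trans ?_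
    have hc1 : |q1| * (1/(y^3*(y+1))) ≤ |q1| * (1/y^4) :=
      mul_le_mul_of_nonneg_left be1 (abs_nonneg _)
    have hc2 : |q2| * ((3*y+2)/(y^3*(y+1)^2)) ≤ |q2| * (4/y^4) :=
      mul_le_mul_of_nonneg_left be2 (abs_nonneg _)
    have hc3 : |a - b| * |Cc| ≤ |a - b| * (2/y^4) :=
      mul_le_mul_of_nonneg_left bc (abs_nonneg _)
    have hfin : 2*a^4/y^4 + 2*b^4/y^4 + |a - b| * (2/y^4) + (|q1| * (1/y^4) + |q2| * (4/y^4))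
        = K/y^4 := by
      rw [hKdef]; ring
    linarith
  -- limits
  have hg0 : Tendsto g atTop (𝓝 0) := by
    have h := (wendel ha).sub (wendel hb)
    rw [sub_zero] at h
    exact h.congr (fun x => by simp only [hgdef]; ring)
  have hL0 : Tendsto L atTop (𝓝 0) := by
    have h1 : Tendsto (fun x:ℝ => q1/x) atTop (𝓝 0) :=
      Tendsto.div_atTop tendsto_const_nhds tendsto_id
    have h2 : Tendsto (fun x:ℝ => q2/x^2) atTop (𝓝 0) :=
      Tendsto.div_atTop tendsto_const_nhds (tendsto_pow_atTop two_ne_zero)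
    simpa [hLdef] using h1.add h2
  have hE0 : Tendsto E atTop (𝓝 0) := by
    have := hg0.sub hL0
    rw [sub_zero] at this
    exact this.congr (fun x => by simp only [hEdef])
  have hlimE : ∀ y : ℝ, x0 ≤ y → Tendsto (fun n : ℕ => E (y + n)) atTop (𝓝 0) := by
    intro y _
    exact hE0.comp (tendsto_atTop_add_const_left atTop y tendsto_natCast_atTop_atTop)
  have hEb := tail_bound E K x0 hK0 hx02 hstep hlimE
  -- final assembly
  rw [isBigO_iff]
  refine ⟨12*K + (|q1| + |q2|)^3 + |q1| * |q2| + |q2|^2, ?_⟩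
  have hx1 : ∀ᶠ x : ℝ in atTop, max x0 (max (2*K+2) (|q1| + |q2| + 2)) ≤ x :=
    eventually_ge_atTop _
  filter_upwards [hx1] with x hx
  have hxx0 : x0 ≤ x := le_trans (le_max_left _ _) hx
  have hx2 : (2:ℝ) ≤ x := le_trans hx02 hxx0
  have hx0 : (0:ℝ) < x := by linarith
  have hxK : 2*K + 2 ≤ x := le_trans (le_trans (le_max_left _ _) (le_max_right _ _)) hx
  have hxq : |q1| + |q2| + 2 ≤ x := le_trans (le_trans (le_max_right _ _) (le_max_right _ _)) hx
  have hxa : (0:ℝ) < x + a := by linarith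
  have hxb : (0:ℝ) < x + b := by linarith
  -- |E x| bounds
  have hEx : |E x| ≤ 2*K/x^3 := hEb x hxx0
  have hx3x : x ≤ x^3 := by
    calc x = x^1 := (pow_one x).symm
      _ ≤ x^3 := pow_le_pow_right₀ (by linarith) (by norm_num)
  have hEx1 : |E x| ≤ 1 := by
    refine hEx.trans ?_
    rw [div_le_one (by positivity)]
    linarith
  -- |L x| bounds
  have hLx : |L x| ≤ (|q1| + |q2|)/x := by
    have e1 : |q1/x| = |q1|/x := by
      rw [abs_div (a := q1), abs_of_pos hx0]
    have e2 : |q2/x^2| = |q2|/x^2 := by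
      rw [abs_div (a := q2), abs_of_pos (by positivity : (0:ℝ) < x^2)]
    have h1 : |q2|/x^2 ≤ |q2|/x := by
      rw [div_le_div_iff₀ (by positivity) hx0]
      nlinarith [abs_nonneg q2, mul_le_mul_of_nonneg_left hx2 (abs_nonneg q2)]
    calc |L x| = |q1/x + q2/x^2| := by rw [hLdef]
      _ ≤ |q1/x| + |q2/x^2| := abs_add_le _ _
      _ = |q1|/x + |q2|/x^2 := by rw [e1, e2]
      _ ≤ |q1|/x + |q2|/x := by linarith
      _ = (|q1| + |q2|)/x := by ring
  have hLx1 : |L x| ≤ 1 := by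
    refine hLx.trans ?_
    rw [div_le_one hx0]
    linarith [abs_nonneg q1, abs_nonneg q2]
  -- f x = exp (g x)
  have hfx : Real.Gamma (x+a)/Real.Gamma (x+b) * x ^ (b-a) = Real.exp (g x) := by
    simp only [hgdef]
    rw [show Real.log (Real.Gamma (x+a)) - Real.log (Real.Gamma (x+b)) - (a-b)*Real.log x
        = (Real.log (Real.Gamma (x+a)) - Real.log (Real.Gamma (x+b))) + Real.log x * (b-a)
        by ring,
      Real.exp_add, Real.exp_sub, Real.exp_log (Real.Gamma_pos_of_pos hxa),
      Real.exp_log (Real.Gamma_pos_of_pos hxb), ← Real.rpow_def_of_pos hx0]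
  -- decomposition
  have hgLE : Real.exp (g x) = Real.exp (L x) * Real.exp (E x) := by
    rw [← Real.exp_add]
    congr 1
    simp only [hEdef]; ring
  have hpoly : (1 + L x + (L x)^2/2)
      - (1 + (a-b)*(a+b-1)/(2*x) + (a-b)*(a-b-1)*(3*(a+b-1)^2-a+b-1)/(24*x^2))
      = q1*q2/x^3 + q2^2/(2*x^4) := by
    simp only [hLdef, hq2, hq1]
    field_simp
    ring
  have hdecomp : Real.Gamma (x + a) / Real.Gamma (x + b) * x ^ (b - a)
        - 1 - (a - b) * (a + b - 1) / (2 * x)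
        - (a - b) * (a - b - 1) * (3 * (a + b - 1) ^ 2 - a + b - 1) / (24 * x ^ 2)
      = Real.exp (L x)*(Real.exp (E x) - 1)
        + (Real.exp (L x) - (1 + L x + (L x)^2/2))
        + (q1*q2/x^3 + q2^2/(2*x^4)) := by
    rw [hfx, hgLE]
    linear_combination hpoly
  -- bounds for the three pieces
  have hexpL3 : Real.exp (L x) ≤ 3 := by
    have h1 : L x ≤ 1 := le_trans (le_abs_self _) hLx1
    calc Real.exp (L x) ≤ Real.exp 1 := Real.exp_le_exp.2 h1
      _ ≤ 3 := by linarith [Real.exp_one_lt_d9]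
  have b1 : |Real.exp (L x)*(Real.exp (E x) - 1)| ≤ 12*K/x^3 := by
    rw [abs_mul, abs_of_pos (Real.exp_pos _)]
    have h1 : |Real.exp (E x) - 1| ≤ 2*|E x| := Real.abs_exp_sub_one_le hEx1
    calc Real.exp (L x) * |Real.exp (E x) - 1| ≤ 3 * (2*|E x|) := by
          apply mul_le_mul hexpL3 h1 (abs_nonneg _) (by norm_num)
      _ ≤ 3 * (2*(2*K/x^3)) := by linarith
      _ = 12*K/x^3 := by ring
  have b2 : |Real.exp (L x) - (1 + L x + (L x)^2/2)| ≤ (|q1| + |q2|)^3/x^3 := by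
    have h1 := Real.exp_bound hLx1 (by norm_num : 0 < 3)
    have h2 : ∑ m ∈ Finset.range 3, (L x)^m / (m.factorial : ℝ)
        = 1 + L x + (L x)^2/2 := by
      simp [Finset.sum_range_succ]
    rw [h2] at h1
    norm_num [Nat.factorial] at h1
    have h3 : |Real.exp (L x) - (1 + L x + (L x)^2/2)| ≤ |L x|^3 := by
      refine h1.trans ?_
      nlinarith [pow_nonneg (abs_nonneg (L x)) 3]
    refine h3.trans ?_
    have h4 : |L x|^3 ≤ ((|q1| + |q2|)/x)^3 :=
      pow_le_pow_left₀ (abs_nonneg _) hLx 3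
    refine h4.trans (le_of_eq ?_)
    rw [div_pow]
  have b3 : |q1*q2/x^3 + q2^2/(2*x^4)| ≤ (|q1| * |q2| + |q2|^2)/x^3 := by
    refine (abs_add_le _ _).trans ?_
    rw [abs_div, abs_div, abs_mul, abs_of_pos (by positivity : (0:ℝ) < x^3),
      abs_of_pos (by positivity : (0:ℝ) < 2*x^4), abs_pow]
    have h1 : |q2|^2/(2*x^4) ≤ |q2|^2/x^3 := by
      rw [div_le_div_iff₀ (by positivity) (by positivity)]
      have hin : (0:ℝ) ≤ 2*x^4 - x^3 := by
        nlinarith [mul_le_mul_of_nonneg_left hx2 (pow_nonneg hx0.le 3)]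
      nlinarith [mul_nonneg (pow_nonneg (abs_nonneg q2) 2) hin]
    rw [add_div]
    linarith
  -- norm of x^(-3)
  have hx3 : x ^ (-3:ℝ) = 1/x^3 := by
    rw [show (-3:ℝ) = -((3:ℕ):ℝ) by norm_num, Real.rpow_neg hx0.le,
      Real.rpow_natCast, one_div]
  rw [Real.norm_eq_abs, Real.norm_eq_abs, hx3, abs_of_pos (by positivity : (0:ℝ) < 1/x^3),
    hdecomp]
  have tri2 := abs_add_le (Real.exp (L x)*(Real.exp (E x) - 1)
      + (Real.exp (L x) - (1 + L x + (L x)^2/2))) (q1*q2/x^3 + q2^2/(2*x^4))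
  have tri3 := abs_add_le (Real.exp (L x)*(Real.exp (E x) - 1))
      (Real.exp (L x) - (1 + L x + (L x)^2/2))
  have hfin : 12*K/x^3 + (|q1| + |q2|)^3/x^3 + (|q1| * |q2| + |q2|^2)/x^3
      = (12*K + (|q1| + |q2|)^3 + |q1| * |q2| + |q2|^2) * (1/x^3) := by ring
  linarith
end

section
/- Let a > 0 be a real number. Then, as the real variable x → +∞, one has Γ(x+a)²/(Γ(x)Γ(x+2a)) = 1 − a²/x + a²(a² + 2a − 1)/(2x²) + O(x^{−3}); that is, the function x ↦ Γ(x+a)²/(Γ(x)Γ(x+2a)) − 1 + a²/x − a²(a² + 2a − 1)/(2x²) is O(x^{−3}) as x → +∞. -/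
set_option maxHeartbeats 1000000

open Filter Asymptotics Finset Topology

lemma grat_factor_eq (a x : ℝ) (j : ℕ) (h : (0:ℝ) < x + a + j) :
    (x + j) * (x + 2*a + j) / (x + a + j)^2 = 1 - a^2/(x+a+j)^2 := by
  field_simp
  ring

lemma grat_seq_ratio (a x : ℝ) (ha : 0 < a) (hx : 0 < x) {n : ℕ} (hn : 1 ≤ n) :
    Real.GammaSeq (x+a) n ^ 2 / (Real.GammaSeq x n * Real.GammaSeq (x+2*a) n)
      = ∏ j ∈ range (n+1), (1 - a^2/(x+a+j)^2) := by
  have hn0 : (0:ℝ) < n := by exact_mod_cast hn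
  have hA : ∀ j ∈ range (n+1), (x + a + (j:ℝ)) ≠ 0 := fun j _ => by positivity
  have hB : ∀ j ∈ range (n+1), (x + (j:ℝ)) ≠ 0 := fun j _ => by positivity
  have hC : ∀ j ∈ range (n+1), (x + 2*a + (j:ℝ)) ≠ 0 := fun j _ => by positivity
  have hAne : (∏ j ∈ range (n+1), (x + a + (j:ℝ))) ≠ 0 := prod_ne_zero_iff.mpr hA
  have hBne : (∏ j ∈ range (n+1), (x + (j:ℝ))) ≠ 0 := prod_ne_zero_iff.mpr hB
  have hCne : (∏ j ∈ range (n+1), (x + 2*a + (j:ℝ))) ≠ 0 := prod_ne_zero_iff.mpr hC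
  have hfac : (n.factorial : ℝ) ≠ 0 := by exact_mod_cast n.factorial_ne_zero
  have key : (n:ℝ)^(x+a) * (n:ℝ)^(x+a) = (n:ℝ)^x * (n:ℝ)^(x+2*a) := by
    rw [← Real.rpow_add hn0, ← Real.rpow_add hn0]; ring_nf
  have hr1 : (n:ℝ)^(x:ℝ) ≠ 0 := (Real.rpow_pos_of_pos hn0 _).ne'
  have hr2 : (n:ℝ)^(x+a) ≠ 0 := (Real.rpow_pos_of_pos hn0 _).ne'
  have hr3 : (n:ℝ)^(x+2*a) ≠ 0 := (Real.rpow_pos_of_pos hn0 _).ne'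
  rw [Finset.prod_congr rfl (fun j hj => (grat_factor_eq a x j (by positivity)).symm)]
  rw [Finset.prod_div_distrib, Finset.prod_mul_distrib, Finset.prod_pow]
  unfold Real.GammaSeq
  field_simp
  rw [mul_comm a 2]
  linear_combination key

lemma grat_prod_tendsto (a x : ℝ) (ha : 0 < a) (hx : 0 < x) :
    Tendsto (fun n : ℕ => ∏ j ∈ range n, (1 - a^2/(x+a+j)^2)) atTop
      (𝓝 (Real.Gamma (x+a)^2 / (Real.Gamma x * Real.Gamma (x+2*a)))) := by
  have hne : Real.Gamma x * Real.Gamma (x + 2*a) ≠ 0 := by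
    have h1 := Real.Gamma_pos_of_pos hx
    have h2 := Real.Gamma_pos_of_pos (by linarith : (0:ℝ) < x + 2*a)
    positivity
  have h : Tendsto (fun n : ℕ => Real.GammaSeq (x+a) n ^ 2 /
      (Real.GammaSeq x n * Real.GammaSeq (x+2*a) n)) atTop
      (𝓝 (Real.Gamma (x+a)^2 / (Real.Gamma x * Real.Gamma (x+2*a)))) :=
    (((Real.GammaSeq_tendsto_Gamma (x+a)).pow 2).div
      ((Real.GammaSeq_tendsto_Gamma x).mul (Real.GammaSeq_tendsto_Gamma (x+2*a))) hne)
  have h' : Tendsto (fun n : ℕ => ∏ j ∈ range (n+1), (1 - a^2/(x+a+j)^2)) atTop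
      (𝓝 (Real.Gamma (x+a)^2 / (Real.Gamma x * Real.Gamma (x+2*a)))) := by
    refine h.congr' ?_
    filter_upwards [eventually_ge_atTop 1] with n hn
    exact grat_seq_ratio a x ha hx hn
  exact (tendsto_add_atTop_iff_nat 1).mp h'

lemma grat_factor_pos (a x : ℝ) (ha : 0 < a) (hx : 0 < x) (j : ℕ) :
    0 < 1 - a^2/(x+a+j)^2 := by
  have h1 : (0:ℝ) < x + a + j := by positivity
  have h2 : a^2 < (x+a+j)^2 := by nlinarith [j.cast_nonneg (α := ℝ)]
  have : a^2/(x+a+j)^2 < 1 := (div_lt_one (by positivity)).mpr h2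
  linarith

lemma grat_log_hasSum (a x : ℝ) (ha : 0 < a) (hx : 0 < x) :
    HasSum (fun k : ℕ => Real.log (1 - a^2/(x+a+k)^2))
      (Real.log (Real.Gamma (x+a)^2 / (Real.Gamma x * Real.Gamma (x+2*a)))) := by
  have hpos := grat_factor_pos a x ha hx
  have hfpos : 0 < Real.Gamma (x+a)^2 / (Real.Gamma x * Real.Gamma (x+2*a)) := by
    have h1 := Real.Gamma_pos_of_pos hx
    have h2 := Real.Gamma_pos_of_pos (by linarith : (0:ℝ) < x + 2*a)
    have h3 := Real.Gamma_pos_of_pos (by linarith : (0:ℝ) < x + a)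
    positivity
  have hlog : Tendsto (fun n : ℕ => ∑ j ∈ range n, Real.log (1 - a^2/(x+a+j)^2)) atTop
      (𝓝 (Real.log (Real.Gamma (x+a)^2 / (Real.Gamma x * Real.Gamma (x+2*a))))) := by
    have := (Real.continuousAt_log hfpos.ne').tendsto.comp (grat_prod_tendsto a x ha hx)
    refine this.congr fun n => ?_
    simp only [Function.comp_apply]
    exact Real.log_prod fun j _ => (hpos j).ne'
  have hneg : ∀ k : ℕ, 0 ≤ -Real.log (1 - a^2/(x+a+k)^2) := by
    intro k
    have h1 : (0:ℝ) < x + a + k := by positivity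
    have : 1 - a^2/(x+a+k)^2 ≤ 1 := by
      have : 0 ≤ a^2/(x+a+k)^2 := by positivity
      linarith
    simp only [neg_nonneg]
    exact Real.log_nonpos (hpos k).le this
  have : HasSum (fun k : ℕ => -Real.log (1 - a^2/(x+a+k)^2))
      (-(Real.log (Real.Gamma (x+a)^2 / (Real.Gamma x * Real.Gamma (x+2*a))))) := by
    rw [hasSum_iff_tendsto_nat_of_nonneg hneg]
    simpa [Finset.sum_neg_distrib] using hlog.neg
  simpa using this.neg

lemma grat_tele (g : ℕ → ℝ) (hm : ∀ k, g (k+1) ≤ g k) (h0 : Tendsto g atTop (𝓝 0)) :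
    HasSum (fun k => g k - g (k+1)) (g 0) := by
  rw [hasSum_iff_tendsto_nat_of_nonneg (fun k => sub_nonneg.mpr (hm k))]
  simp only [Finset.sum_range_sub']
  simpa using tendsto_const_nhds.sub h0

lemma grat_tendsto_zero (y c : ℝ) (p : ℕ) (hp : 0 < p) :
    Tendsto (fun k : ℕ => 1/(y+(k:ℝ)+c)^p) atTop (𝓝 0) := by
  have h1 : Tendsto (fun k : ℕ => (y+(k:ℝ)+c)) atTop atTop := by
    apply tendsto_atTop_add_const_right
    exact tendsto_atTop_add_const_left _ y tendsto_natCast_atTop_atTop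
  have h2 := (tendsto_pow_atTop hp.ne').comp h1
  simpa [one_div, Function.comp_def, Pi.inv_def] using h2.inv_tendsto_atTop

-- the telescoping sum for S4
lemma grat_tele3 (y : ℝ) (hy : 1 ≤ y) :
    HasSum (fun k : ℕ => 1/(y+(k:ℝ))^3 - 1/(y+(k:ℝ)+1)^3) (1/y^3) := by
  have hm : ∀ k : ℕ, 1/(y+((k+1:ℕ):ℝ))^3 ≤ 1/(y+(k:ℝ))^3 := by
    intro k
    have h1 : (0:ℝ) < y + k := by positivity
    gcongr
    · push_cast; linarith
  have h0 : Tendsto (fun k : ℕ => 1/(y+(k:ℝ))^3) atTop (𝓝 0) := by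
    simpa using grat_tendsto_zero y 0 3 (by norm_num)
  have := grat_tele (fun k : ℕ => 1/(y+(k:ℝ))^3) hm h0
  simp only [Nat.cast_zero, add_zero] at this
  refine this.congr_fun fun k => ?_
  push_cast
  ring
-- the telescoping sum for S2
lemma grat_tele2 (y : ℝ) (hy : 1 ≤ y) :
    HasSum (fun k : ℕ => 1/(y+(k:ℝ)-1/2) - 1/(y+(k:ℝ)+1/2)) (1/(y-1/2)) := by
  have hm : ∀ k : ℕ, 1/(y+((k+1:ℕ):ℝ)-1/2) ≤ 1/(y+(k:ℝ)-1/2) := by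
    intro k
    have h1 : (0:ℝ) < y + (k:ℝ) - 1/2 := by
      have : (0:ℝ) ≤ k := k.cast_nonneg
      linarith
    gcongr
    · push_cast; linarith
  have h0 : Tendsto (fun k : ℕ => 1/(y+(k:ℝ)-1/2)) atTop (𝓝 0) := by
    simpa [← sub_eq_add_neg] using grat_tendsto_zero y (-(1/2)) 1 (by norm_num)
  have := grat_tele (fun k : ℕ => 1/(y+(k:ℝ)-1/2)) hm h0
  simp only [Nat.cast_zero, add_zero] at this
  refine this.congr_fun fun k => ?_
  push_cast
  ring

lemma grat_tele_ineq4 (u : ℝ) (hu : 0 < u) :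
    1/(u+1)^4 ≤ (1/3)*(1/u^3 - 1/(u+1)^3) := by
  have h1 : (0:ℝ) < u + 1 := by linarith
  have key : 1/u^3 - 1/(u+1)^3 = (3*u^2+3*u+1)/(u^3*(u+1)^3) := by
    field_simp; ring
  have key2 : (1:ℝ)/3*((3*u^2+3*u+1)/(u^3*(u+1)^3)) = (1*(3*u^2+3*u+1))/(3*(u^3*(u+1)^3)) :=
    div_mul_div_comm _ _ _ _
  rw [key, key2, div_le_div_iff₀ (by positivity) (by positivity)]
  nlinarith [mul_nonneg (pow_nonneg h1.le 3) (by nlinarith : (0:ℝ) ≤ 6*u^2+4*u+1)]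

lemma grat_mid_lower (u : ℝ) (hu : 1 ≤ u) :
    1/u^2 ≤ 1/(u-1/2) - 1/(u+1/2) := by
  have h1 : (0:ℝ) < u - 1/2 := by linarith
  have h2 : (0:ℝ) < u + 1/2 := by linarith
  have h3 : (0:ℝ) < u := by linarith
  have h4 : (0:ℝ) < u^2 - 1/4 := by nlinarith
  have key : 1/(u-1/2) - 1/(u+1/2) = 1/(u^2-1/4) := by
    rw [div_sub_div _ _ h1.ne' h2.ne']; congr 1 <;> ring
  rw [key]
  exact one_div_le_one_div_of_le h4 (by nlinarith)

lemma grat_mid_upper (u : ℝ) (hu : 1 ≤ u) :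
    1/(u-1/2) - 1/(u+1/2) ≤ 1/u^2 + (1/3)*(1/u^4) := by
  have h1 : (0:ℝ) < u - 1/2 := by linarith
  have h2 : (0:ℝ) < u + 1/2 := by linarith
  have h3 : (0:ℝ) < u := by linarith
  have h4 : (0:ℝ) < u^2 - 1/4 := by nlinarith
  have key : 1/(u-1/2) - 1/(u+1/2) = 1/(u^2-1/4) := by
    rw [div_sub_div _ _ h1.ne' h2.ne']; congr 1 <;> ring
  have key2 : 1/(u^2-1/4) - 1/u^2 = (1/4)/((u^2-1/4)*u^2) := by
    rw [div_sub_div _ _ h4.ne' (pow_pos h3 2).ne']; congr 1 <;> ring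
  have hb : (1/4)/((u^2-1/4)*u^2) ≤ (1/3)*(1/u^4) := by
    rw [mul_one_div, div_le_div_iff₀ (by positivity) (by positivity)]
    nlinarith [mul_nonneg (sq_nonneg u) (by nlinarith : (0:ℝ) ≤ u^2-1)]
  rw [key]
  linarith [key2, hb]

lemma grat_sums (y : ℝ) (hy : 1 ≤ y) :
    Summable (fun k : ℕ => 1/(y+(k:ℝ))^2) ∧ Summable (fun k : ℕ => 1/(y+(k:ℝ))^4) ∧
    (∑' k : ℕ, 1/(y+(k:ℝ))^4) ≤ 2/y^3 ∧
    |(∑' k : ℕ, 1/(y+(k:ℝ))^2) - 1/y - 1/(2*y^2)| ≤ 2/y^3 := by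
  have hy0 : (0:ℝ) < y := by linarith
  have hu : ∀ k : ℕ, 1 ≤ y + (k:ℝ) := fun k => by
    have := k.cast_nonneg (α := ℝ); linarith
  have hu0 : ∀ k : ℕ, (0:ℝ) < y + (k:ℝ) := fun k => by linarith [hu k]
  have hT := grat_tele3 y hy
  have hT2 := grat_tele2 y hy
  have hs2 : Summable (fun k : ℕ => 1/(y+(k:ℝ))^2) :=
    Summable.of_nonneg_of_le (fun k => by positivity)
      (fun k => grat_mid_lower (y+(k:ℝ)) (hu k)) hT2.summable
  have h24 : ∀ k : ℕ, 1/(y+(k:ℝ))^4 ≤ 1/(y+(k:ℝ))^2 := fun k => by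
    have : (y+(k:ℝ))^2 ≤ (y+(k:ℝ))^4 := pow_le_pow_right₀ (hu k) (by norm_num)
    exact one_div_le_one_div_of_le (by positivity) this
  have hs4 : Summable (fun k : ℕ => 1/(y+(k:ℝ))^4) :=
    Summable.of_nonneg_of_le (fun k => by positivity) h24 hs2
  have hS4 : (∑' k : ℕ, 1/(y+(k:ℝ))^4) ≤ 2/y^3 := by
    have hs4' : Summable (fun k : ℕ => 1/(y+(k:ℝ)+1)^4) := by
      have := (summable_nat_add_iff 1).mpr hs4
      refine this.congr fun k => ?_
      push_cast; ring_nf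
    have h1 : (∑' k : ℕ, 1/(y+(k:ℝ)+1)^4) ≤ ∑' k : ℕ, (1/3)*(1/(y+(k:ℝ))^3 - 1/(y+(k:ℝ)+1)^3) := by
      refine Summable.tsum_le_tsum (fun k => grat_tele_ineq4 (y+(k:ℝ)) (hu0 k)) hs4'
        (hT.summable.mul_left _)
    have h2 : (∑' k : ℕ, (1/3)*(1/(y+(k:ℝ))^3 - 1/(y+(k:ℝ)+1)^3)) = (1/3)*(1/y^3) :=
      (hT.mul_left (1/3)).tsum_eq
    have h3 : (∑' k : ℕ, 1/(y+(k:ℝ))^4) = 1/y^4 + ∑' k : ℕ, 1/(y+(k:ℝ)+1)^4 := by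
      rw [Summable.tsum_eq_zero_add hs4]
      congr 1
      · norm_num
      · refine tsum_congr fun k => ?_
        push_cast; ring_nf
    have h4 : 1/y^4 ≤ 1/y^3 :=
      one_div_le_one_div_of_le (by positivity) (pow_le_pow_right₀ hy (by norm_num))
    have h5 : (0:ℝ) < 1/y^3 := by positivity
    rw [h3]
    calc 1/y^4 + ∑' k : ℕ, 1/(y+(k:ℝ)+1)^4 ≤ 1/y^3 + (1/3)*(1/y^3) := by
          linarith [h1, h2.le, h2.ge]
      _ ≤ 2/y^3 := by rw [show (2:ℝ)/y^3 = 1/y^3 + 1/y^3 by ring]; linarith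
  refine ⟨hs2, hs4, hS4, ?_⟩
  · -- S2 bound
    have hym : (0:ℝ) < y - 1/2 := by linarith
    have hupper : (∑' k : ℕ, 1/(y+(k:ℝ))^2) ≤ 1/(y-1/2) := by
      rw [← hT2.tsum_eq]
      exact Summable.tsum_le_tsum (fun k => grat_mid_lower (y+(k:ℝ)) (hu k)) hs2 hT2.summable
    have hlower : 1/(y-1/2) ≤ (∑' k : ℕ, 1/(y+(k:ℝ))^2) + (1/3)*(∑' k : ℕ, 1/(y+(k:ℝ))^4) := by
      have hsum : Summable (fun k : ℕ => 1/(y+(k:ℝ))^2 + (1/3)*(1/(y+(k:ℝ))^4)) :=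
        hs2.add (hs4.mul_left _)
      have := Summable.tsum_le_tsum (f := fun k : ℕ => 1/(y+(k:ℝ)-1/2) - 1/(y+(k:ℝ)+1/2))
        (fun k => grat_mid_upper (y+(k:ℝ)) (hu k)) hT2.summable hsum
      rw [hT2.tsum_eq] at this
      rwa [Summable.tsum_add hs2 (hs4.mul_left _), tsum_mul_left] at this
    have hc : 1/(y-1/2) - 1/y - 1/(2*y^2) = 1/(4*y^2*(y-1/2)) := by
      rw [div_sub_div _ _ hym.ne' hy0.ne',
        div_sub_div _ _ (mul_ne_zero hym.ne' hy0.ne') (by positivity : (2*y^2:ℝ) ≠ 0),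
        div_eq_div_iff (by positivity) (by positivity)]
      ring
    have hc0 : (0:ℝ) ≤ 1/(4*y^2*(y-1/2)) := by positivity
    have hcb : 1/(4*y^2*(y-1/2)) ≤ 1/(2*y^3) :=
      one_div_le_one_div_of_le (by positivity) (by nlinarith)
    have hS40 : (0:ℝ) ≤ ∑' k : ℕ, 1/(y+(k:ℝ))^4 :=
      tsum_nonneg fun k => by positivity
    have e1 : 1/(2*y^3) ≤ 2/y^3 := by
      rw [div_le_div_iff₀ (by positivity) (by positivity)]; nlinarith [pow_pos hy0 3]
    rw [abs_le]
    constructor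
    · nlinarith [hlower, hc, hcb, hS4]
    · nlinarith [hupper, hc, hcb, hc0, e1]

lemma grat_log_one_sub (t : ℝ) (h0 : 0 ≤ t) (h2 : t ≤ 1/2) :
    |Real.log (1-t) + t| ≤ 2*t^2 := by
  have h1 : (0:ℝ) < 1 - t := by linarith
  have hup : Real.log (1-t) ≤ -t := by
    have := Real.log_le_sub_one_of_pos h1; linarith
  have hlow : -Real.log (1-t) ≤ (1-t)⁻¹ - 1 := by
    have := Real.log_le_sub_one_of_pos (inv_pos.mpr h1)
    rwa [Real.log_inv] at this
  have hinv : (1-t)⁻¹ ≤ 1 + t + 2*t^2 := by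
    rw [inv_eq_one_div, div_le_iff₀ h1]
    nlinarith [sq_nonneg t]
  rw [abs_le]
  constructor
  · linarith
  · nlinarith [sq_nonneg t]

lemma grat_log_est (a x : ℝ) (ha : 0 < a) (hx1 : 1 ≤ x) (hxa : a ≤ x) :
    |Real.log (Real.Gamma (x+a)^2 / (Real.Gamma x * Real.Gamma (x+2*a)))
        + a^2/(x+a) + a^2/(2*(x+a)^2)|
      ≤ (2*a^2 + 4*a^4)/(x+a)^3 := by
  have hx0 : (0:ℝ) < x := by linarith
  set y := x + a with hy
  have hy1 : (1:ℝ) ≤ y := by simp only [hy]; linarith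
  have hy0 : (0:ℝ) < y := by linarith
  have hy2a : 2*a ≤ y := by simp only [hy]; linarith
  obtain ⟨hs2, hs4, hS4, hS2⟩ := grat_sums y hy1
  have hlog := grat_log_hasSum a x ha hx0
  have hyk : ∀ k : ℕ, (0:ℝ) < y + k := fun k => by
    have := k.cast_nonneg (α := ℝ); linarith
  -- the error terms
  set S2 := ∑' k : ℕ, 1/(y+(k:ℝ))^2 with hS2def
  set S4 := ∑' k : ℕ, 1/(y+(k:ℝ))^4 with hS4def
  have ht : ∀ k : ℕ, 0 ≤ a^2/(y+(k:ℝ))^2 ∧ a^2/(y+(k:ℝ))^2 ≤ 1/2 := by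
    intro k
    refine ⟨by positivity, ?_⟩
    rw [div_le_iff₀ (by positivity)]
    have h1 : y ≤ y + (k:ℝ) := by have := k.cast_nonneg (α := ℝ); linarith
    nlinarith [hyk k]
  have hbound : ∀ k : ℕ,
      |Real.log (1 - a^2/(y+(k:ℝ))^2) + a^2*(1/(y+(k:ℝ))^2)| ≤ (2*a^4)*(1/(y+(k:ℝ))^4) := by
    intro k
    have h := grat_log_one_sub (a^2/(y+(k:ℝ))^2) (ht k).1 (ht k).2
    calc |Real.log (1 - a^2/(y+(k:ℝ))^2) + a^2*(1/(y+(k:ℝ))^2)|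
        = |Real.log (1 - a^2/(y+(k:ℝ))^2) + a^2/(y+(k:ℝ))^2| := by rw [mul_one_div]
      _ ≤ 2*(a^2/(y+(k:ℝ))^2)^2 := h
      _ = (2*a^4)*(1/(y+(k:ℝ))^4) := by
          rw [div_pow, one_div]
          ring
  have habs : Summable (fun k : ℕ => |Real.log (1 - a^2/(y+(k:ℝ))^2) + a^2*(1/(y+(k:ℝ))^2)|) :=
    Summable.of_nonneg_of_le (fun k => abs_nonneg _) hbound (hs4.mul_left _)
  have hesum : Summable (fun k : ℕ => Real.log (1 - a^2/(y+(k:ℝ))^2) + a^2*(1/(y+(k:ℝ))^2)) :=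
    summable_abs_iff.mp habs
  have hgsum : Summable (fun k : ℕ => Real.log (1 - a^2/(y+(k:ℝ))^2)) := hlog.summable
  have htsum : (∑' k : ℕ, (Real.log (1 - a^2/(y+(k:ℝ))^2) + a^2*(1/(y+(k:ℝ))^2)))
      = Real.log (Real.Gamma (x+a)^2 / (Real.Gamma x * Real.Gamma (x+2*a))) + a^2 * S2 := by
    rw [Summable.tsum_add hgsum (hs2.mul_left _), tsum_mul_left, hlog.tsum_eq]
  have hmain : |Real.log (Real.Gamma (x+a)^2 / (Real.Gamma x * Real.Gamma (x+2*a))) + a^2 * S2|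
      ≤ (2*a^4) * S4 := by
    rw [← htsum]
    calc |∑' k : ℕ, (Real.log (1 - a^2/(y+(k:ℝ))^2) + a^2*(1/(y+(k:ℝ))^2))|
        ≤ ∑' k : ℕ, |Real.log (1 - a^2/(y+(k:ℝ))^2) + a^2*(1/(y+(k:ℝ))^2)| := by
          have := norm_tsum_le_tsum_norm
            (f := fun k : ℕ => Real.log (1 - a^2/(y+(k:ℝ))^2) + a^2*(1/(y+(k:ℝ))^2))
            (by simpa only [Real.norm_eq_abs] using habs)
          simpa only [Real.norm_eq_abs] using this
      _ ≤ ∑' k : ℕ, (2*a^4)*(1/(y+(k:ℝ))^4) := Summable.tsum_le_tsum hbound habs (hs4.mul_left _)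
      _ = (2*a^4) * S4 := tsum_mul_left
  set L := Real.log (Real.Gamma (x+a)^2 / (Real.Gamma x * Real.Gamma (x+2*a)))
  have hsplit : L + a^2/y + a^2/(2*y^2)
      = (L + a^2 * S2) - a^2*(S2 - 1/y - 1/(2*y^2)) := by ring
  calc |L + a^2/y + a^2/(2*y^2)|
      = |(L + a^2 * S2) - a^2*(S2 - 1/y - 1/(2*y^2))| := by rw [hsplit]
    _ ≤ |L + a^2 * S2| + |a^2*(S2 - 1/y - 1/(2*y^2))| := abs_sub _ _
    _ ≤ (2*a^4) * S4 + a^2 * (2/y^3) := by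
        have h1 : |a^2*(S2 - 1/y - 1/(2*y^2))| = a^2 * |S2 - 1/y - 1/(2*y^2)| := by
          rw [abs_mul, abs_of_nonneg (sq_nonneg a)]
        rw [h1]
        have := mul_le_mul_of_nonneg_left hS2 (sq_nonneg a)
        linarith [hmain]
    _ ≤ (2*a^4) * (2/y^3) + a^2 * (2/y^3) := by
        have h0 : (0:ℝ) ≤ 2*a^4 := by positivity
        nlinarith [hS4]
    _ = (2*a^2 + 4*a^4)/y^3 := by ring

lemma grat_poly (a x : ℝ) (ha : 0 < a) (hx1 : 1 ≤ x) (hxa : a ≤ x) :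
    |(1 + (-(a^2/(x+a)) - a^2/(2*(x+a)^2))
        + (-(a^2/(x+a)) - a^2/(2*(x+a)^2))^2/2)
      - (1 - a^2/x + a^2*(a^2+2*a-1)/(2*x^2))|
      ≤ (a^2*(8*a+25*a^2+44*a^3+48*a^4+24*a^5+4*a^6)/8)/x^3 := by
  have hx0 : (0:ℝ) < x := by linarith
  have hy0 : (0:ℝ) < x + a := by linarith
  set N : ℝ := (8*a-4*a^2-8*a^3)*x^3 + (21*a^2-20*a^3-20*a^4)*x^2
      + (16*a^3-24*a^4-16*a^5)*x + (4*a^4-8*a^5-4*a^6) with hN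
  set K : ℝ := 8*a+25*a^2+44*a^3+48*a^4+24*a^5+4*a^6 with hK
  have hid : (1 + (-(a^2/(x+a)) - a^2/(2*(x+a)^2))
        + (-(a^2/(x+a)) - a^2/(2*(x+a)^2))^2/2)
      - (1 - a^2/x + a^2*(a^2+2*a-1)/(2*x^2))
      = a^2 * N / (8*x^2*(x+a)^4) := by
    rw [hN]
    field_simp
    ring
  rw [hid, abs_div, abs_of_pos (by positivity : (0:ℝ) < 8*x^2*(x+a)^4), abs_mul,
    abs_of_nonneg (sq_nonneg a)]
  -- |N| ≤ K * x^3
  have hxp : x^2 ≤ x^3 := by nlinarith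
  have hxq : x ≤ x^3 := by nlinarith
  have hx3 : (1:ℝ) ≤ x^3 := by nlinarith
  have hNb : |N| ≤ K * x^3 := by
    rw [abs_le, hN, hK]
    constructor <;>
      nlinarith [mul_le_mul_of_nonneg_left hxp (by positivity : (0:ℝ) ≤ a^2),
        mul_le_mul_of_nonneg_left hxp (by positivity : (0:ℝ) ≤ a^3),
        mul_le_mul_of_nonneg_left hxp (by positivity : (0:ℝ) ≤ a^4),
        mul_le_mul_of_nonneg_left hxq (by positivity : (0:ℝ) ≤ a^3),
        mul_le_mul_of_nonneg_left hxq (by positivity : (0:ℝ) ≤ a^4),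
        mul_le_mul_of_nonneg_left hxq (by positivity : (0:ℝ) ≤ a^5),
        mul_le_mul_of_nonneg_left hx3 (by positivity : (0:ℝ) ≤ a^4),
        mul_le_mul_of_nonneg_left hx3 (by positivity : (0:ℝ) ≤ a^5),
        mul_le_mul_of_nonneg_left hx3 (by positivity : (0:ℝ) ≤ a^6),
        mul_nonneg (by positivity : (0:ℝ) ≤ a) (by positivity : (0:ℝ) ≤ x^3),
        mul_nonneg (by positivity : (0:ℝ) ≤ a^2) (by positivity : (0:ℝ) ≤ x^3),
        mul_nonneg (by positivity : (0:ℝ) ≤ a^3) (by positivity : (0:ℝ) ≤ x^3),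
        mul_nonneg (by positivity : (0:ℝ) ≤ a^4) (by positivity : (0:ℝ) ≤ x^3),
        mul_nonneg (by positivity : (0:ℝ) ≤ a^5) (by positivity : (0:ℝ) ≤ x^3),
        mul_nonneg (by positivity : (0:ℝ) ≤ a^6) (by positivity : (0:ℝ) ≤ x^3),
        mul_nonneg (by positivity : (0:ℝ) ≤ a^2) (by positivity : (0:ℝ) ≤ x^2),
        mul_nonneg (by positivity : (0:ℝ) ≤ a^3) (by positivity : (0:ℝ) ≤ x^2),
        mul_nonneg (by positivity : (0:ℝ) ≤ a^4) (by positivity : (0:ℝ) ≤ x^2),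
        mul_nonneg (by positivity : (0:ℝ) ≤ a^3) hx0.le,
        mul_nonneg (by positivity : (0:ℝ) ≤ a^4) hx0.le,
        mul_nonneg (by positivity : (0:ℝ) ≤ a^5) hx0.le]
  -- denominator: x^6 ≤ x^2*(x+a)^4
  have hden : x^2*x^4 ≤ x^2*(x+a)^4 := by
    have : x^4 ≤ (x+a)^4 := by
      apply pow_le_pow_left₀ (by positivity) (by linarith)
    nlinarith [sq_nonneg x, pow_pos hx0 2]
  calc a^2 * |N| / (8*x^2*(x+a)^4) ≤ a^2 * (K*x^3) / (8*x^2*(x+a)^4) := by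
        apply div_le_div_of_nonneg_right ?_ (by positivity)
        · exact mul_le_mul_of_nonneg_left hNb (sq_nonneg a)
    _ ≤ a^2 * (K*x^3) / (8*(x^2*x^4)) := by
        apply div_le_div_of_nonneg_left (by positivity) (by positivity)
        nlinarith [hden]
    _ = (a^2*K/8)/x^3 := by
        field_simp

/-- Asymptotic expansion of `Γ(x+a)²/(Γ(x)Γ(x+2a))` up to order `x⁻³`. -/
theorem gamma_ratio_asymptotic_two (a : ℝ) (ha : 0 < a) :
    (fun x : ℝ =>
        Real.Gamma (x + a) ^ 2 / (Real.Gamma x * Real.Gamma (x + 2 * a))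
          - 1 + a ^ 2 / x - a ^ 2 * (a ^ 2 + 2 * a - 1) / (2 * x ^ 2))
      =O[atTop] fun x : ℝ => x ^ (-3 : ℝ) := by
  rw [isBigO_iff]
  refine ⟨2*(2*a^2 + 4*a^4) + 8*a^6 + a^2*(8*a+25*a^2+44*a^3+48*a^4+24*a^5+4*a^6)/8, ?_⟩
  filter_upwards [eventually_ge_atTop (1:ℝ), eventually_ge_atTop a,
    eventually_ge_atTop (2*a^2), eventually_ge_atTop (2*a^2+4*a^4)] with x hx1 hxa hx2a hxC1
  have hx0 : (0:ℝ) < x := by linarith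
  have hy0 : (0:ℝ) < x + a := by linarith
  have hyx : x ≤ x + a := by linarith
  set u : ℝ := -(a^2/(x+a)) - a^2/(2*(x+a)^2) with hu
  set F : ℝ := Real.Gamma (x + a) ^ 2 / (Real.Gamma x * Real.Gamma (x + 2 * a)) with hF
  set L : ℝ := Real.log F with hL
  have hFpos : 0 < F := by
    rw [hF]
    have h1 := Real.Gamma_pos_of_pos hx0
    have h2 := Real.Gamma_pos_of_pos (by linarith : (0:ℝ) < x + 2*a)
    have h3 := Real.Gamma_pos_of_pos (by linarith : (0:ℝ) < x + a)
    positivity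
  have hFL : F = Real.exp L := (Real.exp_log hFpos).symm
  have hy3x : x ≤ (x+a)^3 := by nlinarith
  have hx3y : x^3 ≤ (x+a)^3 := pow_le_pow_left₀ hx0.le (by linarith) 3
  have hLu : |L - u| ≤ (2*a^2 + 4*a^4)/(x+a)^3 := by
    have h := grat_log_est a x ha hx1 hxa
    have he : L - u = Real.log (Real.Gamma (x+a)^2 / (Real.Gamma x * Real.Gamma (x+2*a)))
        + a^2/(x+a) + a^2/(2*(x+a)^2) := by
      rw [hL, hF, hu]; ring
    rw [he]; exact h
  have hu0 : u ≤ 0 := by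
    rw [hu]
    have h1 : (0:ℝ) ≤ a^2/(x+a) := by positivity
    have h2 : (0:ℝ) ≤ a^2/(2*(x+a)^2) := by positivity
    linarith
  have huabs : |u| ≤ 2*a^2/x := by
    rw [abs_of_nonpos hu0, hu]
    have h1 : a^2/(x+a) ≤ a^2/x := by
      apply div_le_div_of_nonneg_left (sq_nonneg a) hx0 hyx
    have h2 : a^2/(2*(x+a)^2) ≤ a^2/x := by
      apply div_le_div_of_nonneg_left (sq_nonneg a) hx0
      nlinarith
    rw [show (2:ℝ)*a^2/x = a^2/x + a^2/x by ring]
    linarith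
  have hu1 : |u| ≤ 1 := by
    refine huabs.trans ?_
    rw [div_le_one hx0]; linarith
  have hLu1 : |L - u| ≤ 1 := by
    refine hLu.trans ?_
    rw [div_le_one (by positivity)]
    linarith [hy3x]
  -- step 1
  have h1 : |F - Real.exp u| ≤ 2*((2*a^2 + 4*a^4)/(x+a)^3) := by
    have he : F - Real.exp u = Real.exp u * (Real.exp (L - u) - 1) := by
      rw [hFL, mul_sub, mul_one, ← Real.exp_add]
      ring_nf
    rw [he, abs_mul, abs_of_pos (Real.exp_pos u)]
    have heu : Real.exp u ≤ 1 := by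
      rw [← Real.exp_zero]; exact Real.exp_le_exp.mpr hu0
    have hee := Real.abs_exp_sub_one_le hLu1
    calc Real.exp u * |Real.exp (L - u) - 1| ≤ 1 * (2*|L - u|) :=
          mul_le_mul heu hee (abs_nonneg _) zero_le_one
      _ = 2*|L - u| := one_mul _
      _ ≤ 2*((2*a^2 + 4*a^4)/(x+a)^3) := by linarith
  -- step 2
  have h2 : |Real.exp u - (1 + u + u^2/2)| ≤ |u|^3 := by
    have hb := Real.exp_bound hu1 (by norm_num : 0 < 3)
    have hs : ∑ i ∈ Finset.range 3, u^i/(Nat.factorial i) = 1 + u + u^2/2 := by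
      simp [Finset.sum_range_succ, Nat.factorial]
    rw [hs] at hb
    refine hb.trans ?_
    have : ((3:ℕ).succ : ℝ)/((Nat.factorial 3) * 3) ≤ 1 := by norm_num [Nat.factorial]
    nlinarith [pow_nonneg (abs_nonneg u) 3]
  have h3 : |u|^3 ≤ 8*a^6/x^3 := by
    calc |u|^3 ≤ (2*a^2/x)^3 := pow_le_pow_left₀ (abs_nonneg u) huabs 3
      _ = 8*a^6/x^3 := by rw [div_pow]; ring_nf
  -- step 3
  have h4 := grat_poly a x ha hx1 hxa
  -- combine
  have hnorm : ‖x ^ (-3:ℝ)‖ = 1/x^3 := by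
    rw [Real.norm_eq_abs, abs_of_pos (Real.rpow_pos_of_pos hx0 _),
      Real.rpow_neg hx0.le, show ((3:ℝ) = ((3:ℕ):ℝ)) by norm_num, Real.rpow_natCast,
      one_div]
  rw [hnorm]
  have hgoal : Real.Gamma (x + a) ^ 2 / (Real.Gamma x * Real.Gamma (x + 2 * a))
      - 1 + a ^ 2 / x - a ^ 2 * (a ^ 2 + 2 * a - 1) / (2 * x ^ 2)
      = (F - Real.exp u) + (Real.exp u - (1 + u + u^2/2))
        + ((1 + u + u^2/2) - (1 - a^2/x + a^2*(a^2+2*a-1)/(2*x^2))) := by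
    rw [hF]; ring
  rw [Real.norm_eq_abs, hgoal]
  have hy3 : 2*((2*a^2 + 4*a^4)/(x+a)^3) ≤ 2*((2*a^2 + 4*a^4)/x^3) := by
    have := div_le_div_of_nonneg_left (by positivity : (0:ℝ) ≤ 2*a^2+4*a^4)
      (by positivity : (0:ℝ) < x^3) hx3y
    linarith
  calc |(F - Real.exp u) + (Real.exp u - (1 + u + u^2/2))
        + ((1 + u + u^2/2) - (1 - a^2/x + a^2*(a^2+2*a-1)/(2*x^2)))|
      ≤ |(F - Real.exp u) + (Real.exp u - (1 + u + u^2/2))|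
        + |(1 + u + u^2/2) - (1 - a^2/x + a^2*(a^2+2*a-1)/(2*x^2))| := abs_add_le _ _
    _ ≤ |F - Real.exp u| + |Real.exp u - (1 + u + u^2/2)|
        + |(1 + u + u^2/2) - (1 - a^2/x + a^2*(a^2+2*a-1)/(2*x^2))| := by
        linarith [abs_add_le (F - Real.exp u) (Real.exp u - (1 + u + u^2/2))]
    _ ≤ 2*((2*a^2 + 4*a^4)/x^3) + 8*a^6/x^3
        + (a^2*(8*a+25*a^2+44*a^3+48*a^4+24*a^5+4*a^6)/8)/x^3 := by
        linarith [h1, h2, h3, h4, hy3]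
    _ = (2*(2*a^2 + 4*a^4) + 8*a^6 + a^2*(8*a+25*a^2+44*a^3+48*a^4+24*a^5+4*a^6)/8) * (1/x^3) := by
        field_simp
end

section
/- Let m ≥ 1 be an integer and let b, a_1, …, a_m be real numbers. The series ∑_{i ∈ ℕ₊^m} (i_1^{a_1} ⋯ i_m^{a_m}) / (i_1 + ⋯ + i_m)^b converges if and only if b > max{ ∑_{j ∈ J} (a_j + 1) : ∅ ≠ J ⊆ {1, …, m} }. -/
open Finset

private lemma summable_pnat_rpow {p : ℝ} (hp : p < -1) :
    Summable (fun n : ℕ+ => ((n : ℕ) : ℝ) ^ p) := by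
  have h : Summable (fun n : ℕ => (n : ℝ) ^ p) := Real.summable_nat_rpow.2 hp
  exact h.comp_injective (fun x y hxy => PNat.coe_injective hxy)

private lemma rpow_low {c K N x : ℝ} (hN : 0 < N) (h1 : N ≤ x) (h2 : x ≤ K * N) (hK : 1 ≤ K) :
    K ^ (-|c|) * N ^ c ≤ x ^ c := by
  have hx : 0 < x := hN.trans_le h1
  rcases le_total c 0 with hc | hc
  · rw [abs_of_nonpos hc, neg_neg, ← Real.mul_rpow (by linarith) hN.le]
    exact Real.rpow_le_rpow_of_nonpos hx h2 hc
  · calc K ^ (-|c|) * N ^ c ≤ 1 * N ^ c := by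
          apply mul_le_mul_of_nonneg_right
            (Real.rpow_le_one_of_one_le_of_nonpos hK (neg_nonpos.2 (abs_nonneg c)))
            (Real.rpow_nonneg hN.le c)
    _ = N ^ c := one_mul _
    _ ≤ x ^ c := Real.rpow_le_rpow hN.le h1 hc

private lemma rpow_high {c K N x : ℝ} (hN : 0 < N) (h1 : N ≤ x) (h2 : x ≤ K * N) (hK : 1 ≤ K) :
    x ^ c ≤ K ^ |c| * N ^ c := by
  have hx : 0 < x := hN.trans_le h1
  rcases le_total c 0 with hc | hc
  · calc x ^ c ≤ N ^ c := Real.rpow_le_rpow_of_nonpos hN h1 hc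
    _ = 1 * N ^ c := (one_mul _).symm
    _ ≤ K ^ |c| * N ^ c := by
        apply mul_le_mul_of_nonneg_right (Real.one_le_rpow hK (abs_nonneg c))
          (Real.rpow_nonneg hN.le c)
  · rw [abs_of_nonneg hc, ← Real.mul_rpow (by linarith) hN.le]
    exact Real.rpow_le_rpow hx.le h2 hc

private lemma summable_pi_prod : ∀ (m : ℕ) (g : Fin m → ℕ+ → ℝ), (∀ j n, 0 ≤ g j n) →
    (∀ j, Summable (g j)) → Summable (fun i : Fin m → ℕ+ => ∏ j, g j (i j)) := by
  intro m
  induction m with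
  | zero =>
    intro g _ _
    exact (hasSum_fintype _).summable
  | succ n ih =>
    intro g hg0 hg
    have htail : Summable (fun i : Fin n → ℕ+ => ∏ j, g j.succ (i j)) :=
      ih (fun j => g j.succ) (fun j k => hg0 _ _) (fun j => hg j.succ)
    have hpos1 : 0 ≤ g 0 := fun k => hg0 0 k
    have hpos2 : 0 ≤ (fun i : Fin n → ℕ+ => ∏ j, g j.succ (i j)) :=
      fun i => Finset.prod_nonneg fun j _ => hg0 _ _
    have h1 := (hg 0).mul_of_nonneg htail hpos1 hpos2
    have h2 := (Fin.consEquiv (fun _ : Fin (n+1) => ℕ+)).symm.summable_iff.2 h1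
    have heq : (fun i : Fin (n+1) → ℕ+ => ∏ j, g j (i j))
        = (fun x : ℕ+ × (Fin n → ℕ+) => g 0 x.1 * ∏ j, g j.succ (x.2 j))
          ∘ (Fin.consEquiv (fun _ : Fin (n+1) => ℕ+)).symm := by
      funext i
      simp [Fin.prod_univ_succ, Fin.tail, Fin.consEquiv]
    rw [heq]
    exact h2

/-- The higher zeta series `∑_{i ∈ ℕ₊^m} i₁^{a₁} ⋯ i_m^{a_m} / (i₁ + ⋯ + i_m)^b`
converges iff `b` exceeds `∑_{j ∈ J} (a_j + 1)` for every nonempty `J ⊆ {1, …, m}`. -/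
theorem zeta_series_summable_iff (m : ℕ) (hm : 0 < m) (b : ℝ) (a : Fin m → ℝ) :
    Summable (fun i : Fin m → ℕ+ =>
        (∏ j, ((i j : ℕ) : ℝ) ^ (a j)) / (∑ j, ((i j : ℕ) : ℝ)) ^ b) ↔
      ∀ J : Finset (Fin m), J.Nonempty → ∑ j ∈ J, (a j + 1) < b := by
  set f : (Fin m → ℕ+) → ℝ := fun i =>
    (∏ j, ((i j : ℕ) : ℝ) ^ (a j)) / (∑ j, ((i j : ℕ) : ℝ)) ^ b with hf
  constructor
  · intro hsum J hJ
    by_contra hcon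
    push_neg at hcon
    obtain ⟨l, hl⟩ := hJ
    set Φ : ((N : ℕ+) × ({j // j ∈ J.erase l} → Fin (N : ℕ))) → (Fin m → ℕ+) :=
      fun p j => if hj : j ∈ J.erase l then
          Nat.toPNat ((p.1 : ℕ) + ((p.2 ⟨j, hj⟩ : Fin (p.1 : ℕ)) : ℕ)) (Nat.add_pos_left p.1.pos _)
        else if j = l then 2 * p.1 else 1 with hΦ
    have hinj : Function.Injective Φ := by
      rintro ⟨N, u⟩ ⟨N', u'⟩ h
      have hll := congrFun h l
      simp only [hΦ, dif_neg (Finset.notMem_erase l J), if_pos rfl] at hll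
      obtain rfl : N = N' := mul_left_cancel hll
      suffices hu : u = u' by rw [hu]
      funext jx
      obtain ⟨j, hj⟩ := jx
      have hjj := congrFun h j
      simp only [hΦ, dif_pos hj] at hjj
      have h2 : (N : ℕ) + ((u ⟨j, hj⟩ : Fin (N:ℕ)) : ℕ)
          = (N : ℕ) + ((u' ⟨j, hj⟩ : Fin (N:ℕ)) : ℕ) :=
        congrArg (fun x : ℕ+ => (x : ℕ)) hjj
      exact Fin.ext (Nat.add_left_cancel h2)
    have hres : Summable (f ∘ Φ) := hsum.comp_injective hinj
    have hsig : Summable (fun N : ℕ+ => ∑' u : ({j // j ∈ J.erase l} → Fin (N : ℕ)),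
        (f ∘ Φ) ⟨N, u⟩) := hres.sigma
    set C : ℝ := (∏ j ∈ J, (2:ℝ) ^ (-|a j|)) * ((2*m:ℝ) ^ (-|b|)) with hC
    have hm1 : (1:ℝ) ≤ (m:ℝ) := by exact_mod_cast hm
    have h2m : (0:ℝ) < 2*m := by linarith
    have hCpos : 0 < C :=
      mul_pos (Finset.prod_pos fun j _ => Real.rpow_pos_of_pos two_pos _)
        (Real.rpow_pos_of_pos h2m _)
    have key : ∀ N : ℕ+, C * ((N:ℕ):ℝ) ^ (-1:ℝ) ≤
        ∑' u : ({j // j ∈ J.erase l} → Fin (N : ℕ)), (f ∘ Φ) ⟨N, u⟩ := by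
      intro N
      rw [tsum_fintype]
      have hNpos : (0:ℝ) < ((N:ℕ):ℝ) := by exact_mod_cast N.pos
      have hN1 : (1:ℝ) ≤ ((N:ℕ):ℝ) := by exact_mod_cast N.one_le
      have hterm : ∀ u : ({j // j ∈ J.erase l} → Fin (N : ℕ)),
          C * ((N:ℕ):ℝ) ^ (∑ j ∈ J, a j - b) ≤ (f ∘ Φ) ⟨N, u⟩ := by
        intro u
        set i := Φ ⟨N, u⟩ with hi
        have hrange : ∀ j ∈ J, ((N:ℕ):ℝ) ≤ ((i j : ℕ):ℝ) ∧ ((i j :ℕ):ℝ) ≤ 2 * ((N:ℕ):ℝ) := by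
          intro j hj
          by_cases hje : j ∈ J.erase l
          · have hij : (i j : ℕ) = (N : ℕ) + ((u ⟨j, hje⟩ : Fin (N:ℕ)) : ℕ) := by
              simp only [hi, hΦ, dif_pos hje]
              rfl
            have hu : (((u ⟨j, hje⟩ : Fin (N:ℕ)) : ℕ) : ℝ) < ((N:ℕ):ℝ) := by
              exact_mod_cast (u ⟨j, hje⟩).isLt
            rw [hij]
            push_cast
            constructor <;> linarith
          · have hjl : j = l := by
              by_contra hne
              exact hje (Finset.mem_erase.2 ⟨hne, hj⟩)
            subst hjl
            have hij : i j = 2 * N := by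
              simp only [hi, hΦ, dif_neg hje]
              simp
            rw [hij]
            rw [PNat.mul_coe]
            push_cast
            constructor <;> linarith
        have houtside : ∀ j, j ∉ J → ((i j : ℕ):ℝ) = 1 := by
          intro j hj
          have h1 : j ∉ J.erase l := fun h => hj (Finset.mem_of_mem_erase h)
          have h2 : j ≠ l := fun h => hj (h ▸ hl)
          have : i j = 1 := by simp only [hi, hΦ, dif_neg h1, if_neg h2]
          rw [this, PNat.one_coe, Nat.cast_one]
        have hnum : (∏ j ∈ J, (2:ℝ)^(-|a j|)) * ((N:ℕ):ℝ) ^ (∑ j ∈ J, a j)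
            ≤ ∏ j, ((i j :ℕ):ℝ) ^ (a j) := by
          rw [← Finset.prod_subset (Finset.subset_univ J)
            (fun x _ hx => by rw [houtside x hx, Real.one_rpow])]
          rw [Real.rpow_sum_of_pos hNpos, ← Finset.prod_mul_distrib]
          exact Finset.prod_le_prod (fun j _ => by positivity)
            (fun j hj => rpow_low hNpos (hrange j hj).1
              (by rw [two_mul] at *; exact (hrange j hj).2) one_le_two)
        have hS1 : ((N:ℕ):ℝ) ≤ ∑ j, ((i j :ℕ):ℝ) := by
          calc ((N:ℕ):ℝ) ≤ ((i l : ℕ):ℝ) := (hrange l hl).1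
            _ ≤ ∑ j, ((i j :ℕ):ℝ) :=
              Finset.single_le_sum (f := fun j => ((i j : ℕ):ℝ))
                (fun j _ => by positivity) (Finset.mem_univ l)
        have hS2 : ∑ j, ((i j :ℕ):ℝ) ≤ (2*m) * ((N:ℕ):ℝ) := by
          calc ∑ j, ((i j :ℕ):ℝ) ≤ ∑ _j : Fin m, 2 * ((N:ℕ):ℝ) := by
                apply Finset.sum_le_sum
                intro j _
                by_cases hj : j ∈ J
                · exact (hrange j hj).2
                · rw [houtside j hj]; linarith
            _ = (2*m) * ((N:ℕ):ℝ) := by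
                rw [Finset.sum_const, Finset.card_univ, Fintype.card_fin, nsmul_eq_mul]
                ring
        have hden : (∑ j, ((i j :ℕ):ℝ)) ^ b ≤ (2*m:ℝ) ^ |b| * ((N:ℕ):ℝ) ^ b :=
          rpow_high hNpos hS1 hS2 (by linarith)
        have hSpos : (0:ℝ) < ∑ j, ((i j :ℕ):ℝ) := lt_of_lt_of_le hNpos hS1
        have hfe : (f ∘ Φ) ⟨N,u⟩
            = (∏ j, ((i j :ℕ):ℝ) ^ (a j)) / (∑ j, ((i j:ℕ):ℝ)) ^ b := rfl
        rw [hfe]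
        calc C * ((N:ℕ):ℝ) ^ (∑ j ∈ J, a j - b)
            = ((∏ j ∈ J, (2:ℝ)^(-|a j|)) * ((N:ℕ):ℝ) ^ (∑ j ∈ J, a j))
              / ((2*m:ℝ) ^ |b| * ((N:ℕ):ℝ) ^ b) := by
              rw [Real.rpow_sub hNpos, hC, Real.rpow_neg h2m.le]
              have hx : ((2*m:ℝ) ^ |b|) ≠ 0 := (Real.rpow_pos_of_pos h2m _).ne'
              have hy : (((N:ℕ):ℝ) ^ b) ≠ 0 := (Real.rpow_pos_of_pos hNpos _).ne'
              field_simp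
          _ ≤ _ := by
              apply div_le_div₀ (Finset.prod_nonneg fun j _ => by positivity) hnum
                (Real.rpow_pos_of_pos hSpos b) hden
      calc C * ((N:ℕ):ℝ) ^ (-1:ℝ)
          ≤ C * ((N:ℕ):ℝ) ^ (((J.card - 1 : ℕ):ℝ) + (∑ j ∈ J, a j - b)) := by
            apply mul_le_mul_of_nonneg_left _ hCpos.le
            apply Real.rpow_le_rpow_of_exponent_le hN1
            have hcard : ((J.card - 1 : ℕ):ℝ) = (J.card:ℝ) - 1 := by
              have h1 : 1 ≤ J.card := Finset.card_pos.2 ⟨l, hl⟩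
              push_cast [Nat.cast_sub h1]
              ring
            have hsplit : ∑ j ∈ J, (a j + 1) = ∑ j ∈ J, a j + J.card := by
              rw [Finset.sum_add_distrib, Finset.sum_const, nsmul_eq_mul, mul_one]
            rw [hcard]
            have := hcon
            rw [hsplit] at this
            linarith
        _ = (((N:ℕ):ℝ) ^ (J.card - 1 : ℕ)) * (C * ((N:ℕ):ℝ) ^ (∑ j ∈ J, a j - b)) := by
            rw [Real.rpow_add hNpos, ← Real.rpow_natCast ((N:ℕ):ℝ) (J.card - 1)]
            ring
        _ = ∑ _u : ({j // j ∈ J.erase l} → Fin (N:ℕ)),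
              (C * ((N:ℕ):ℝ) ^ (∑ j ∈ J, a j - b)) := by
            rw [Finset.sum_const, Finset.card_univ, nsmul_eq_mul]
            congr 1
            rw [Fintype.card_fun, Fintype.card_fin, Fintype.card_coe,
              Finset.card_erase_of_mem hl]
            push_cast
            ring
        _ ≤ ∑ u, (f ∘ Φ) ⟨N, u⟩ := Finset.sum_le_sum fun u _ => hterm u
    have hles : Summable (fun N : ℕ+ => C * ((N:ℕ):ℝ) ^ (-1:ℝ)) :=
      Summable.of_nonneg_of_le
        (fun N => mul_nonneg hCpos.le (Real.rpow_nonneg (Nat.cast_nonneg _) _)) key hsig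
    have h2 : Summable (fun N : ℕ+ => ((N:ℕ):ℝ) ^ (-1:ℝ)) :=
      (summable_mul_left_iff hCpos.ne').1 hles
    have h3 : Summable (fun n : ℕ => ((n+1:ℕ):ℝ) ^ (-1:ℝ)) := by
      have hq := h2.comp_injective (i := fun n : ℕ => (⟨n+1, n.succ_pos⟩ : ℕ+))
        (fun x y hxy => by simpa using congrArg (fun z : ℕ+ => (z:ℕ)) hxy)
      exact hq
    have h4 : Summable (fun n : ℕ => ((n:ℕ):ℝ) ^ (-1:ℝ)) := by
      have := (summable_nat_add_iff (f := fun n : ℕ => ((n:ℕ):ℝ) ^ (-1:ℝ)) 1).1 (by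
        simpa using h3)
      simpa using this
    have h5 : (-1:ℝ) < -1 := Real.summable_nat_rpow.1 h4
    linarith
  · intro hb
    have hnem : (Finset.univ : Finset (Fin m)).Nonempty := ⟨⟨0, hm⟩, Finset.mem_univ _⟩
    have hm1 : (1:ℝ) ≤ (m:ℝ) := by exact_mod_cast hm
    set c₀ := Finset.univ.sup' hnem
      (fun l => (a l + 1) + ∑ j ∈ Finset.univ.erase l, max (a j + 1) 0) with hc0
    have hc₀b : c₀ < b := by
      rw [Finset.sup'_lt_iff]
      intro l _
      have key : (a l + 1) + ∑ j ∈ Finset.univ.erase l, max (a j + 1) 0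
          = ∑ j ∈ insert l ((Finset.univ.erase l).filter (fun j => 0 < a j + 1)), (a j + 1) := by
        rw [Finset.sum_insert (by simp)]
        congr 1
        rw [Finset.sum_filter]
        apply Finset.sum_congr rfl
        intro j _
        rcases lt_or_ge 0 (a j + 1) with h | h
        · rw [if_pos h, max_eq_left h.le]
        · rw [if_neg (not_lt.2 h), max_eq_right h]
      rw [key]
      exact hb _ ⟨l, Finset.mem_insert_self _ _⟩
    set ε := (b - c₀) / m with hε
    have hεpos : 0 < ε := div_pos (by linarith) (by exact_mod_cast hm)
    set t : Fin m → ℝ := fun j => max (a j + 1) 0 + ε with ht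
    have htpos : ∀ j, 0 < t j := fun j =>
      add_pos_of_nonneg_of_pos (le_max_right _ _) hεpos
    have hel : ∀ l : Fin m, a l - b + ∑ j ∈ Finset.univ.erase l, t j < -1 := by
      intro l
      have h1 : ∑ j ∈ Finset.univ.erase l, t j
          = ∑ j ∈ Finset.univ.erase l, max (a j + 1) 0 + ((m:ℝ) - 1) * ε := by
        rw [ht, Finset.sum_add_distrib, Finset.sum_const, nsmul_eq_mul,
          Finset.card_erase_of_mem (Finset.mem_univ l), Finset.card_univ, Fintype.card_fin,
          Nat.cast_sub hm]
        push_cast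
        ring
      have h2 : (a l + 1) + ∑ j ∈ Finset.univ.erase l, max (a j + 1) 0 ≤ c₀ := by
        rw [hc0]
        exact Finset.le_sup' (fun l => (a l + 1) + ∑ j ∈ Finset.univ.erase l, max (a j + 1) 0)
          (Finset.mem_univ l)
      have h3 : ((m:ℝ) - 1) * ε < (m:ℝ) * ε := by nlinarith [hεpos]
      have h4 : (m:ℝ) * ε = b - c₀ := by
        rw [hε]
        field_simp
      linarith
    have hej : ∀ j : Fin m, a j - t j < -1 := by
      intro j
      have := le_max_left (a j + 1) 0
      rw [ht]
      simp only
      linarith [hεpos, le_max_left (a j + 1) 0]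
    set g : Fin m → Fin m → ℕ+ → ℝ := fun l j n => ((n:ℕ):ℝ) ^
      (if j = l then a l - b + ∑ j' ∈ Finset.univ.erase l, t j' else a j - t j) with hg
    have hgsum : ∀ l j, Summable (g l j) := by
      intro l j
      by_cases h : j = l
      · subst h
        simp only [hg, if_pos rfl]
        exact summable_pnat_rpow (hel j)
      · simp only [hg, if_neg h]
        exact summable_pnat_rpow (hej j)
    have hG : ∀ l, Summable (fun i : Fin m → ℕ+ => ∏ j, g l j (i j)) := fun l =>
      summable_pi_prod m (g l) (fun j n => Real.rpow_nonneg (Nat.cast_nonneg _) _) (hgsum l)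
    have hM : Summable (fun i : Fin m → ℕ+ => (m:ℝ) ^ |b| * ∑ l, ∏ j, g l j (i j)) :=
      (summable_sum (fun l (_ : l ∈ Finset.univ) => hG l)).mul_left _
    apply Summable.of_nonneg_of_le _ _ hM
    · intro i
      apply div_nonneg (Finset.prod_nonneg fun j _ => Real.rpow_nonneg (Nat.cast_nonneg _) _)
      exact Real.rpow_nonneg (Finset.sum_nonneg fun j _ => Nat.cast_nonneg _) _
    intro i
    obtain ⟨l, -, hmax⟩ := Finset.exists_max_image Finset.univ (fun j => i j) hnem
    have hpos : ∀ j, (0:ℝ) < ((i j :ℕ):ℝ) := fun j => by exact_mod_cast (i j).pos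
    have hNl1 : (1:ℝ) ≤ ((i l : ℕ):ℝ) := by exact_mod_cast (i l).one_le
    have hS1 : ((i l :ℕ):ℝ) ≤ ∑ j, ((i j:ℕ):ℝ) :=
      Finset.single_le_sum (f := fun j => ((i j : ℕ):ℝ)) (fun j _ => (hpos j).le)
        (Finset.mem_univ l)
    have hS2 : ∑ j, ((i j:ℕ):ℝ) ≤ (m:ℝ) * ((i l:ℕ):ℝ) := by
      calc ∑ j, ((i j:ℕ):ℝ) ≤ ∑ _j : Fin m, ((i l:ℕ):ℝ) := by
            apply Finset.sum_le_sum
            intro j _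
            exact_mod_cast hmax j (Finset.mem_univ j)
        _ = (m:ℝ) * ((i l:ℕ):ℝ) := by
            rw [Finset.sum_const, Finset.card_univ, Fintype.card_fin, nsmul_eq_mul]
    have hSpos : (0:ℝ) < ∑ j, ((i j:ℕ):ℝ) := lt_of_lt_of_le (hpos l) hS1
    have hden : (m:ℝ)^(-|b|) * ((i l:ℕ):ℝ)^b ≤ (∑ j, ((i j:ℕ):ℝ))^b :=
      rpow_low (hpos l) hS1 hS2 hm1
    have hDpos : (0:ℝ) < (m:ℝ)^(-|b|) * ((i l:ℕ):ℝ)^b :=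
      mul_pos (Real.rpow_pos_of_pos (by linarith) _) (Real.rpow_pos_of_pos (hpos l) _)
    have hPnonneg : (0:ℝ) ≤ ∏ j, ((i j:ℕ):ℝ)^(a j) :=
      Finset.prod_nonneg fun j _ => Real.rpow_nonneg (hpos j).le _
    have hterm : ∀ j ∈ Finset.univ.erase l,
        ((i j:ℕ):ℝ)^(a j) ≤ ((i j:ℕ):ℝ)^(a j - t j) * ((i l:ℕ):ℝ)^(t j) := by
      intro j _
      calc ((i j:ℕ):ℝ)^(a j) = ((i j:ℕ):ℝ)^(a j - t j) * ((i j:ℕ):ℝ)^(t j) := by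
            rw [← Real.rpow_add (hpos j)]
            ring_nf
        _ ≤ ((i j:ℕ):ℝ)^(a j - t j) * ((i l:ℕ):ℝ)^(t j) := by
            apply mul_le_mul_of_nonneg_left
              (Real.rpow_le_rpow (hpos j).le
                (by exact_mod_cast hmax j (Finset.mem_univ j)) (htpos j).le)
              (Real.rpow_nonneg (hpos j).le _)
    have hstep3 : (∏ j, ((i j:ℕ):ℝ)^(a j)) * ((i l:ℕ):ℝ)^(-b) ≤ ∏ j, g l j (i j) := by
      calc (∏ j, ((i j:ℕ):ℝ)^(a j)) * ((i l:ℕ):ℝ)^(-b)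
          = (((i l:ℕ):ℝ)^(a l) * ∏ j ∈ Finset.univ.erase l, ((i j:ℕ):ℝ)^(a j))
            * ((i l:ℕ):ℝ)^(-b) := by
            rw [← Finset.mul_prod_erase Finset.univ (fun j => ((i j:ℕ):ℝ)^(a j))
              (Finset.mem_univ l)]
        _ ≤ (((i l:ℕ):ℝ)^(a l) * ∏ j ∈ Finset.univ.erase l,
              (((i j:ℕ):ℝ)^(a j - t j) * ((i l:ℕ):ℝ)^(t j))) * ((i l:ℕ):ℝ)^(-b) := by
            apply mul_le_mul_of_nonneg_right _ (Real.rpow_nonneg (hpos l).le _)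
            apply mul_le_mul_of_nonneg_left
              (Finset.prod_le_prod (fun j _ => Real.rpow_nonneg (hpos j).le _) hterm)
              (Real.rpow_nonneg (hpos l).le _)
        _ = ((i l:ℕ):ℝ)^(a l - b + ∑ j ∈ Finset.univ.erase l, t j)
            * ∏ j ∈ Finset.univ.erase l, ((i j:ℕ):ℝ)^(a j - t j) := by
            rw [Finset.prod_mul_distrib, ← Real.rpow_sum_of_pos (hpos l)]
            rw [show a l - b + ∑ j ∈ Finset.univ.erase l, t j
              = a l + ((∑ j ∈ Finset.univ.erase l, t j) + -b) by ring]
            rw [Real.rpow_add (hpos l), Real.rpow_add (hpos l)]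
            ring
        _ = ∏ j, g l j (i j) := by
            rw [← Finset.mul_prod_erase Finset.univ (fun j => g l j (i j))
              (Finset.mem_univ l)]
            congr 1
            · simp [hg]
            · apply Finset.prod_congr rfl
              intro j hj
              simp only [hg, if_neg (Finset.ne_of_mem_erase hj)]
    calc f i = (∏ j, ((i j:ℕ):ℝ)^(a j)) / (∑ j, ((i j:ℕ):ℝ))^b := rfl
      _ ≤ (∏ j, ((i j:ℕ):ℝ)^(a j)) / ((m:ℝ)^(-|b|) * ((i l:ℕ):ℝ)^b) := by
          rw [div_le_div_iff₀ (Real.rpow_pos_of_pos hSpos b) hDpos]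
          exact mul_le_mul_of_nonneg_left hden hPnonneg
      _ = (m:ℝ)^|b| * ((∏ j, ((i j:ℕ):ℝ)^(a j)) * ((i l:ℕ):ℝ)^(-b)) := by
          rw [Real.rpow_neg (by linarith : (0:ℝ) ≤ (m:ℝ)), Real.rpow_neg (hpos l).le]
          have h1 : ((m:ℝ)^|b|) ≠ 0 := (Real.rpow_pos_of_pos (by linarith) _).ne'
          have h2 : (((i l:ℕ):ℝ)^b) ≠ 0 := (Real.rpow_pos_of_pos (hpos l) _).ne'
          field_simp
      _ ≤ (m:ℝ)^|b| * (∏ j, g l j (i j)) :=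
          mul_le_mul_of_nonneg_left hstep3 (Real.rpow_nonneg (by linarith) _)
      _ ≤ (m:ℝ)^|b| * ∑ l', ∏ j, g l' j (i j) := by
          apply mul_le_mul_of_nonneg_left _ (Real.rpow_nonneg (by linarith) _)
          exact Finset.single_le_sum (f := fun l' => ∏ j, g l' j (i j))
            (fun l' _ => Finset.prod_nonneg fun j _ => Real.rpow_nonneg (hpos j).le _)
            (Finset.mem_univ l)
end

section
/- Let m ≥ 1 be an integer, let L be a finite index set, and for each l ∈ L let c_{l,1}, …, c_{l,m} ≥ 0 be nonnegative real coefficients, not all zero, defining the linear functional l(i_1, …, i_m) = ∑_{j=1}^m c_{l,j} i_j, and let a_l ∈ ℝ be an exponent associated to l; let b ∈ ℝ. If the series ∑_{i ∈ ℕ₊^m} (∏_{l ∈ L} l(i_1, …, i_m)^{a_l}) / (i_1 + ⋯ + i_m)^b converges, then for every nonempty subset J ⊆ {1, …, m} one has b > |J| + ∑_{l ∈ L, J ∼ l} a_l, where |J| is the cardinality of J and J ∼ l means that c_{l,j} ≠ 0 for some j ∈ J. -/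
open scoped Classical

lemma aux_rpow_min {u v x a : ℝ} (hu : 0 < u) (h1 : u ≤ x) (h2 : x ≤ v) :
    min (u ^ a) (v ^ a) ≤ x ^ a := by
  rcases le_or_gt 0 a with ha | ha
  · exact le_trans (min_le_left _ _) (Real.rpow_le_rpow hu.le h1 ha)
  · exact le_trans (min_le_right _ _)
      (Real.rpow_le_rpow_of_nonpos (hu.trans_le h1) h2 ha.le)

lemma aux_rpow_max {u v x a : ℝ} (hu : 0 < u) (h1 : u ≤ x) (h2 : x ≤ v) :
    x ^ a ≤ max (u ^ a) (v ^ a) := by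
  rcases le_or_gt 0 a with ha | ha
  · exact le_trans (Real.rpow_le_rpow (hu.le.trans h1) h2 ha) (le_max_right _ _)
  · exact le_trans (Real.rpow_le_rpow_of_nonpos hu h1 ha.le) (le_max_left _ _)

noncomputable def Ik (k : ℕ) : Finset ℕ+ :=
  (Finset.range (2 ^ k)).map ⟨fun n => ⟨2 ^ k + n, by positivity⟩,
    fun x y h => by
      have := congrArg (PNat.val) h; simpa using this⟩

lemma mem_Ik {k : ℕ} {i : ℕ+} : i ∈ Ik k ↔ 2 ^ k ≤ (i : ℕ) ∧ (i : ℕ) < 2 ^ (k + 1) := by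
  constructor
  · rintro hi
    simp only [Ik, Finset.mem_map, Finset.mem_range, Function.Embedding.coeFn_mk] at hi
    obtain ⟨n, hn, rfl⟩ := hi
    show 2 ^ k ≤ 2 ^ k + n ∧ 2 ^ k + n < 2 ^ (k + 1)
    constructor
    · omega
    · have : 2 ^ (k + 1) = 2 ^ k + 2 ^ k := by ring
      omega
  · rintro ⟨h1, h2⟩
    simp only [Ik, Finset.mem_map, Finset.mem_range, Function.Embedding.coeFn_mk]
    refine ⟨(i : ℕ) - 2 ^ k, ?_, ?_⟩
    · have : 2 ^ (k + 1) = 2 ^ k + 2 ^ k := by ring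
      omega
    · apply PNat.coe_injective
      show 2 ^ k + ((i : ℕ) - 2 ^ k) = (i : ℕ)
      omega

lemma card_Ik (k : ℕ) : (Ik k).card = 2 ^ k := by
  simp [Ik]

lemma disjoint_Ik {k k' : ℕ} (h : k ≠ k') : Disjoint (Ik k) (Ik k') := by
  rw [Finset.disjoint_left]
  intro i hi hi'
  rw [mem_Ik] at hi hi'
  rcases lt_or_gt_of_ne h with hk | hk
  · have : 2 ^ (k + 1) ≤ 2 ^ k' := Nat.pow_le_pow_right (by norm_num) hk
    omega
  · have : 2 ^ (k' + 1) ≤ 2 ^ k := Nat.pow_le_pow_right (by norm_num) hk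
    omega

/-- Necessary condition for the convergence of a higher zeta series built from a finite
family of linear functionals with nonnegative coefficients. -/
theorem zeta_series_linear_functionals_necessary (m : ℕ) (hm : 0 < m)
    (L : Type*) [Fintype L]
    (c : L → Fin m → ℝ) (hc : ∀ l j, 0 ≤ c l j) (hc0 : ∀ l, ∃ j, c l j ≠ 0)
    (a : L → ℝ) (b : ℝ)
    (hsum : Summable (fun i : Fin m → ℕ+ =>
        (∏ l, (∑ j, c l j * ((i j : ℕ) : ℝ)) ^ (a l)) / (∑ j, ((i j : ℕ) : ℝ)) ^ b)) :
    ∀ J : Finset (Fin m), J.Nonempty →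
      (J.card : ℝ) + ∑ l ∈ Finset.univ.filter (fun l => ∃ j ∈ J, c l j ≠ 0), a l < b := by
  intro J hJ
  by_contra hble
  push_neg at hble
  set P : Finset L := Finset.univ.filter (fun l => ∃ j ∈ J, c l j ≠ 0) with hP
  set A : ℝ := ∑ l ∈ P, a l with hA
  set f : (Fin m → ℕ+) → ℝ := fun i =>
    (∏ l, (∑ j, c l j * ((i j : ℕ) : ℝ)) ^ (a l)) / (∑ j, ((i j : ℕ) : ℝ)) ^ b with hf
  have hsum' : Summable f := hsum
  have hNnn : ∀ (l) (i : Fin m → ℕ+), 0 ≤ ∑ j, c l j * ((i j : ℕ) : ℝ) :=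
    fun l i => Finset.sum_nonneg fun j _ => mul_nonneg (hc l j) (by positivity)
  have hfnn : ∀ i, 0 ≤ f i := fun i =>
    div_nonneg (Finset.prod_nonneg fun l _ => Real.rpow_nonneg (hNnn l i) _)
      (Real.rpow_nonneg (Finset.sum_nonneg fun j _ => by positivity) _)
  -- the injection from J-indexed tuples
  set ι : (↥J → ℕ+) → (Fin m → ℕ+) :=
    (fun i j => if h : j ∈ J then i ⟨j, h⟩ else 1) with hι_def
  have hι : Function.Injective ι := by
    intro x y hxy
    funext j
    have := congrFun hxy j.1
    simpa [hι_def, j.2] using this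
  have hF : Summable (f ∘ ι) := hsum'.comp_injective hι
  -- constants
  set σ : L → ℝ := fun l => ∑ j, c l j with hσ_def
  have hσ : ∀ l, 0 < σ l := by
    intro l
    obtain ⟨j, hj⟩ := hc0 l
    exact Finset.sum_pos' (fun j _ => hc l j)
      ⟨j, Finset.mem_univ j, (hc l j).lt_of_ne (Ne.symm hj)⟩
  set α : L → ℝ := fun l => ∑ j ∈ J, c l j with hα_def
  have hαP : ∀ l ∈ P, 0 < α l := by
    intro l hl
    rw [hP, Finset.mem_filter] at hl
    obtain ⟨-, j, hjJ, hj⟩ := hl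
    exact Finset.sum_pos' (fun j _ => hc l j) ⟨j, hjJ, (hc l j).lt_of_ne (Ne.symm hj)⟩
  have hα0 : ∀ l ∉ P, ∀ j ∈ J, c l j = 0 := by
    intro l hl j hj
    by_contra h
    exact hl (by rw [hP, Finset.mem_filter]; exact ⟨Finset.mem_univ l, j, hj, h⟩)
  set γ : L → ℝ := fun l =>
    if l ∈ P then min (α l ^ a l) ((2 * σ l) ^ a l) else (σ l) ^ a l with hγ_def
  have hγ : ∀ l, 0 < γ l := by
    intro l
    by_cases hl : l ∈ P
    · simp only [hγ_def, if_pos hl]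
      exact lt_min (Real.rpow_pos_of_pos (hαP l hl) _)
        (Real.rpow_pos_of_pos (by have := hσ l; linarith) _)
    · simp only [hγ_def, if_neg hl]
      exact Real.rpow_pos_of_pos (hσ l) _
  set C1 : ℝ := ∏ l, γ l with hC1_def
  have hC1 : 0 < C1 := Finset.prod_pos fun l _ => hγ l
  have hJcard : 0 < (J.card : ℝ) := by
    have := Finset.card_pos.mpr hJ
    exact_mod_cast this
  set C2 : ℝ := max ((J.card : ℝ) ^ b) ((2 * (m : ℝ)) ^ b) with hC2_def
  have hC2 : 0 < C2 := lt_max_of_lt_left (Real.rpow_pos_of_pos hJcard _)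
  set c0 : ℝ := C1 / C2 with hc0_def
  have hc0pos : 0 < c0 := div_pos hC1 hC2
  -- exponent function
  set e : L → ℝ := fun l => if l ∈ P then a l else 0 with he_def
  have hsume : ∑ l, e l = A := by
    rw [hA, he_def]
    rw [Finset.sum_ite_mem]
    rw [Finset.univ_inter]
  -- key pointwise estimate
  have key : ∀ (k : ℕ) (i : ↥J → ℕ+), (∀ j, i j ∈ Ik k) →
      c0 * ((2 : ℝ) ^ k) ^ (A - b) ≤ f (ι i) := by
    intro k i hi
    set t : ℝ := (2 : ℝ) ^ k with ht_def
    have ht0 : (0 : ℝ) < t := by positivity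
    have ht1 : (1 : ℝ) ≤ t := one_le_pow₀ (by norm_num)
    have hlo : ∀ j : ↥J, t ≤ ((i j : ℕ) : ℝ) := by
      intro j
      have := (mem_Ik.mp (hi j)).1
      rw [ht_def]
      exact_mod_cast this
    have hhi : ∀ j : ↥J, ((i j : ℕ) : ℝ) ≤ 2 * t := by
      intro j
      have h2 := (mem_Ik.mp (hi j)).2
      have : ((i j : ℕ) : ℝ) ≤ ((2 ^ (k + 1) : ℕ) : ℝ) := by exact_mod_cast h2.le
      calc ((i j : ℕ) : ℝ) ≤ ((2 ^ (k + 1) : ℕ) : ℝ) := this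
        _ = 2 * t := by rw [ht_def]; push_cast [pow_succ]; ring
    have hιlo : ∀ j, (1 : ℝ) ≤ ((ι i j : ℕ) : ℝ) := by
      intro j
      have := (ι i j).one_le
      exact_mod_cast this
    have hιhi : ∀ j, ((ι i j : ℕ) : ℝ) ≤ 2 * t := by
      intro j
      by_cases hj : j ∈ J
      · rw [hι_def]; simp only [dif_pos hj]; exact hhi ⟨j, hj⟩
      · rw [hι_def]; simp only [dif_neg hj, PNat.one_coe, Nat.cast_one]; linarith
    -- numerator bound
    have hterm : ∀ l, γ l * t ^ (e l) ≤ (∑ j, c l j * ((ι i j : ℕ) : ℝ)) ^ (a l) := by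
      intro l
      by_cases hl : l ∈ P
      · -- α l * t ≤ N ≤ 2 σ l * t
        have hNlo : α l * t ≤ ∑ j, c l j * ((ι i j : ℕ) : ℝ) := by
          have h1 : ∑ j ∈ J, c l j * ((ι i j : ℕ) : ℝ) ≤
              ∑ j, c l j * ((ι i j : ℕ) : ℝ) :=
            Finset.sum_le_sum_of_subset_of_nonneg (Finset.subset_univ J)
              (fun j _ _ => mul_nonneg (hc l j) (by positivity))
          have h2 : α l * t ≤ ∑ j ∈ J, c l j * ((ι i j : ℕ) : ℝ) := by
            rw [hα_def, Finset.sum_mul]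
            apply Finset.sum_le_sum
            intro j hj
            have : t ≤ ((ι i j : ℕ) : ℝ) := by
              rw [hι_def]; simp only [dif_pos hj]; exact hlo ⟨j, hj⟩
            exact mul_le_mul_of_nonneg_left this (hc l j)
          linarith
        have hNhi : ∑ j, c l j * ((ι i j : ℕ) : ℝ) ≤ 2 * σ l * t := by
          have : ∑ j, c l j * ((ι i j : ℕ) : ℝ) ≤ ∑ j, c l j * (2 * t) :=
            Finset.sum_le_sum fun j _ => mul_le_mul_of_nonneg_left (hιhi j) (hc l j)
          rw [← Finset.sum_mul] at this
          rw [hσ_def]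
          calc ∑ j, c l j * ((ι i j : ℕ) : ℝ) ≤ (∑ j, c l j) * (2 * t) := this
            _ = 2 * (∑ j, c l j) * t := by ring
        have hstep := aux_rpow_min (a := a l) (mul_pos (hαP l hl) ht0) hNlo hNhi
        have heq : min ((α l * t) ^ a l) ((2 * σ l * t) ^ a l) = γ l * t ^ (e l) := by
          rw [Real.mul_rpow (hαP l hl).le ht0.le,
            Real.mul_rpow (by have := hσ l; linarith : (0:ℝ) ≤ 2 * σ l) ht0.le,
            hγ_def, he_def]
          simp only [if_pos hl]
          rw [min_mul_of_nonneg _ _ (Real.rpow_nonneg ht0.le _)]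
        rw [← heq]
        exact hstep
      · -- N = σ l exactly
        have hNeq : ∑ j, c l j * ((ι i j : ℕ) : ℝ) = σ l := by
          rw [hσ_def]
          apply Finset.sum_congr rfl
          intro j _
          by_cases hj : j ∈ J
          · rw [hα0 l hl j hj]; ring
          · rw [hι_def]; simp [dif_neg hj]
        rw [hNeq, hγ_def, he_def]
        simp only [if_neg hl]
        rw [Real.rpow_zero, mul_one]
    have hnum : C1 * t ^ A ≤ ∏ l, (∑ j, c l j * ((ι i j : ℕ) : ℝ)) ^ (a l) := by
      have h1 : ∏ l, (γ l * t ^ (e l)) ≤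
          ∏ l, (∑ j, c l j * ((ι i j : ℕ) : ℝ)) ^ (a l) :=
        Finset.prod_le_prod
          (fun l _ => mul_nonneg (hγ l).le (Real.rpow_nonneg ht0.le _))
          (fun l _ => hterm l)
      calc C1 * t ^ A = (∏ l, γ l) * ∏ l, t ^ (e l) := by
            rw [hC1_def, ← hsume, Real.rpow_sum_of_pos ht0]
        _ = ∏ l, (γ l * t ^ (e l)) := (Finset.prod_mul_distrib).symm
        _ ≤ _ := h1
    -- denominator bound
    have hDlo : (J.card : ℝ) * t ≤ ∑ j, ((ι i j : ℕ) : ℝ) := by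
      have h1 : ∑ j ∈ J, ((ι i j : ℕ) : ℝ) ≤ ∑ j, ((ι i j : ℕ) : ℝ) :=
        Finset.sum_le_sum_of_subset_of_nonneg (Finset.subset_univ J)
          (fun j _ _ => by positivity)
      have h2 : (J.card : ℝ) * t ≤ ∑ j ∈ J, ((ι i j : ℕ) : ℝ) := by
        calc (J.card : ℝ) * t = ∑ _j ∈ J, t := by rw [Finset.sum_const, nsmul_eq_mul]
          _ ≤ ∑ j ∈ J, ((ι i j : ℕ) : ℝ) := Finset.sum_le_sum fun j hj => by
              rw [hι_def]; simp only [dif_pos hj]; exact hlo ⟨j, hj⟩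
      linarith
    have hDhi : ∑ j, ((ι i j : ℕ) : ℝ) ≤ 2 * (m : ℝ) * t := by
      calc ∑ j, ((ι i j : ℕ) : ℝ) ≤ ∑ _j : Fin m, 2 * t :=
            Finset.sum_le_sum fun j _ => hιhi j
        _ = (m : ℝ) * (2 * t) := by rw [Finset.sum_const, nsmul_eq_mul]; simp
        _ = 2 * (m : ℝ) * t := by ring
    have hDpos : 0 < ∑ j, ((ι i j : ℕ) : ℝ) := lt_of_lt_of_le (mul_pos hJcard ht0) hDlo
    have hden : (∑ j, ((ι i j : ℕ) : ℝ)) ^ b ≤ C2 * t ^ b := by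
      have hstep := aux_rpow_max (a := b) (mul_pos hJcard ht0) hDlo hDhi
      have hmpos : (0:ℝ) < 2 * (m:ℝ) := by
        have : (0:ℝ) < (m:ℝ) := by exact_mod_cast hm
        linarith
      have heq : max (((J.card : ℝ) * t) ^ b) ((2 * (m : ℝ) * t) ^ b) = C2 * t ^ b := by
        rw [Real.mul_rpow hJcard.le ht0.le, Real.mul_rpow hmpos.le ht0.le, hC2_def,
          max_mul_of_nonneg _ _ (Real.rpow_nonneg ht0.le _)]
      rw [← heq]
      exact hstep
    -- combine
    have hfinal : (C1 * t ^ A) / (C2 * t ^ b) ≤ f (ι i) := by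
      rw [hf]
      apply div_le_div₀ (Finset.prod_nonneg fun l _ => Real.rpow_nonneg (hNnn l (ι i)) _)
        hnum (Real.rpow_pos_of_pos hDpos b) hden
    calc c0 * t ^ (A - b) = (C1 * t ^ A) / (C2 * t ^ b) := by
          rw [hc0_def, Real.rpow_sub ht0]
          field_simp
      _ ≤ f (ι i) := hfinal
  -- blocks
  set B : ℕ → Finset (↥J → ℕ+) := fun k => Fintype.piFinset fun _ => Ik k with hB_def
  have hBcard : ∀ k, (B k).card = (2 ^ k) ^ J.card := by
    intro k
    rw [hB_def]
    rw [Fintype.card_piFinset]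
    simp [card_Ik, Finset.prod_const]
  have hblock : ∀ k, c0 ≤ ∑ i ∈ B k, f (ι i) := by
    intro k
    set t : ℝ := (2 : ℝ) ^ k with ht_def
    have ht0 : (0 : ℝ) < t := by positivity
    have ht1 : (1 : ℝ) ≤ t := one_le_pow₀ (by norm_num)
    have h1 : (B k).card • (c0 * t ^ (A - b)) ≤ ∑ i ∈ B k, f (ι i) := by
      apply Finset.card_nsmul_le_sum
      intro i hi
      exact key k i (fun j => Fintype.mem_piFinset.mp hi j)
    rw [nsmul_eq_mul, hBcard k] at h1
    have h2 : (1 : ℝ) ≤ t ^ ((J.card : ℝ) + (A - b)) :=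
      Real.one_le_rpow ht1 (by linarith)
    calc c0 = c0 * 1 := (mul_one c0).symm
      _ ≤ c0 * (t ^ ((J.card : ℝ) + (A - b))) :=
          mul_le_mul_of_nonneg_left h2 hc0pos.le
      _ = (((2 ^ k) ^ J.card : ℕ) : ℝ) * (c0 * t ^ (A - b)) := by
          rw [Real.rpow_add ht0, Real.rpow_natCast]
          push_cast
          ring
      _ ≤ ∑ i ∈ B k, f (ι i) := h1
  have hdisj : ∀ k k', k ≠ k' → Disjoint (B k) (B k') := by
    intro k k' hkk'
    rw [Finset.disjoint_left]
    intro i hi hi'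
    obtain ⟨j0, hj0⟩ := hJ
    have h1 := Fintype.mem_piFinset.mp hi ⟨j0, hj0⟩
    have h2 := Fintype.mem_piFinset.mp hi' ⟨j0, hj0⟩
    exact (Finset.disjoint_left.mp (disjoint_Ik hkk')) h1 h2
  -- conclusion
  obtain ⟨K, hK⟩ := exists_nat_gt ((∑' i, (f ∘ ι) i) / c0)
  have hS : ∑ i ∈ (Finset.range K).biUnion B, (f ∘ ι) i ≤ ∑' i, (f ∘ ι) i :=
    Summable.sum_le_tsum _ (fun i _ => hfnn (ι i)) hF
  rw [Finset.sum_biUnion (fun x _ y _ hxy => hdisj x y hxy)] at hS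
  have hKc : (K : ℝ) * c0 ≤ ∑ k ∈ Finset.range K, ∑ i ∈ B k, (f ∘ ι) i := by
    have := Finset.card_nsmul_le_sum (Finset.range K)
      (fun k => ∑ i ∈ B k, (f ∘ ι) i) c0 (fun k _ => hblock k)
    rwa [Finset.card_range, nsmul_eq_mul] at this
  have : (∑' i, (f ∘ ι) i) / c0 * c0 < (K : ℝ) * c0 :=
    mul_lt_mul_of_pos_right hK hc0pos
  rw [div_mul_cancel₀ _ hc0pos.ne'] at this
  linarith
end

section
/- Let m ≥ 1 be an integer, let L be a finite index set, and for each l ∈ L let c_{l,1}, …, c_{l,m} ≥ 0 be nonnegative real coefficients, not all zero, defining the linear functional l(i_1, …, i_m) = ∑_{j=1}^m c_{l,j} i_j, and let a_l ∈ ℝ be an exponent associated to l; let a_0, b ∈ ℝ. If the series ∑_{i ∈ ℕ₊^m} |−i_1 + i_2 + ⋯ + i_m|^{a_0} (∏_{l ∈ L} l(i_1, …, i_m)^{a_l}) / (i_1 + ⋯ + i_m)^b converges (where terms with |−i_1 + i_2 + ⋯ + i_m| = 0 are taken to be 0), then for every nonempty subset J ⊆ {1, …, m} one has b > |J| + a_0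 + ∑_{l ∈ L, J ∼ l} a_l, where |J| is the cardinality of J and J ∼ l means that c_{l,j} ≠ 0 for some j ∈ J. -/
open scoped Classical

private lemma rpow_lower_aux {α β N X e : ℝ} (hN : 0 < N) (hα : 0 < α)
    (h1 : α * N ≤ X) (h2 : X ≤ β * N) :
    N ^ e * min (α ^ e) (β ^ e) ≤ X ^ e := by
  have hX : 0 < X := lt_of_lt_of_le (by positivity) h1
  have hβ : 0 < β := by
    by_contra h
    push_neg at h
    nlinarith
  rcases le_or_gt 0 e with he | he
  · calc N ^ e * min (α ^ e) (β ^ e) ≤ N ^ e * α ^ e :=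
          mul_le_mul_of_nonneg_left (min_le_left _ _) (Real.rpow_nonneg hN.le e)
      _ = (α * N) ^ e := by rw [Real.mul_rpow hα.le hN.le]; ring
      _ ≤ X ^ e := Real.rpow_le_rpow (by positivity) h1 he
  · calc N ^ e * min (α ^ e) (β ^ e) ≤ N ^ e * β ^ e :=
          mul_le_mul_of_nonneg_left (min_le_right _ _) (Real.rpow_nonneg hN.le e)
      _ = (β * N) ^ e := by rw [Real.mul_rpow hβ.le hN.le]; ring
      _ ≤ X ^ e := Real.rpow_le_rpow_of_nonpos hX h2 he.le

private lemma rpow_upper_aux {α β N X e : ℝ} (hN : 0 < N) (hα : 0 < α)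
    (h1 : α * N ≤ X) (h2 : X ≤ β * N) :
    X ^ e ≤ N ^ e * max (α ^ e) (β ^ e) := by
  have hX : 0 < X := lt_of_lt_of_le (by positivity) h1
  have hβ : 0 < β := by
    by_contra h
    push_neg at h
    nlinarith
  rcases le_or_gt 0 e with he | he
  · calc X ^ e ≤ (β * N) ^ e := Real.rpow_le_rpow hX.le h2 he
      _ = N ^ e * β ^ e := by rw [Real.mul_rpow hβ.le hN.le]; ring
      _ ≤ N ^ e * max (α ^ e) (β ^ e) :=
          mul_le_mul_of_nonneg_left (le_max_right _ _) (Real.rpow_nonneg hN.le e)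
  · calc X ^ e ≤ (α * N) ^ e := Real.rpow_le_rpow_of_nonpos (by positivity) h1 he.le
      _ = N ^ e * α ^ e := by rw [Real.mul_rpow hα.le hN.le]; ring
      _ ≤ N ^ e * max (α ^ e) (β ^ e) :=
          mul_le_mul_of_nonneg_left (le_max_left _ _) (Real.rpow_nonneg hN.le e)


private lemma block_nat_eq {cc k k' x : ℕ} (hc : 1 ≤ cc)
    (h1 : cc * 2 ^ k ≤ x) (h2 : x < cc * 2 ^ k + 2 ^ k)
    (h3 : cc * 2 ^ k' ≤ x) (h4 : x < cc * 2 ^ k' + 2 ^ k') : k = k' := by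
  have key : ∀ p q : ℕ, p < q → cc * 2 ^ p + 2 ^ p ≤ cc * 2 ^ q := by
    intro p q hpq
    calc cc * 2 ^ p + 2 ^ p ≤ cc * 2 ^ p + cc * 2 ^ p := by
          have : 2 ^ p ≤ cc * 2 ^ p := Nat.le_mul_of_pos_left _ hc
          omega
      _ = cc * 2 ^ (p + 1) := by ring
      _ ≤ cc * 2 ^ q := Nat.mul_le_mul_left _ (Nat.pow_le_pow_right (by norm_num) hpq)
  rcases lt_trichotomy k k' with h | h | h
  · exact absurd (key k k' h) (by omega)
  · exact h
  · exact absurd (key k' k h) (by omega)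


private def blockSet (m : ℕ) (hm : 0 < m) (J : Finset (Fin m)) (k : ℕ) :
    Finset (Fin m → ℕ+) :=
  Fintype.piFinset fun j =>
    if j ∈ J then
      (if j = (⟨0, hm⟩ : Fin m) then
        Finset.Ico ⟨4 * m * 2 ^ k, by exact Nat.mul_pos (Nat.mul_pos (by norm_num) hm) (by positivity)⟩
          ⟨4 * m * 2 ^ k + 2 ^ k, by positivity⟩
      else
        Finset.Ico ⟨2 ^ k, by positivity⟩ ⟨2 ^ k + 2 ^ k, by positivity⟩)
    else {1}

private lemma mem_blockSet_iff {m : ℕ} {hm : 0 < m} {J : Finset (Fin m)} {k : ℕ}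
    {i : Fin m → ℕ+} :
    i ∈ blockSet m hm J k ↔ ∀ j : Fin m,
      (j ∈ J → ((j = (⟨0, hm⟩ : Fin m) →
          4 * m * 2 ^ k ≤ (i j : ℕ) ∧ (i j : ℕ) < 4 * m * 2 ^ k + 2 ^ k) ∧
        (j ≠ (⟨0, hm⟩ : Fin m) → 2 ^ k ≤ (i j : ℕ) ∧ (i j : ℕ) < 2 ^ k + 2 ^ k))) ∧
      (j ∉ J → (i j : ℕ) = 1) := by
  rw [blockSet, Fintype.mem_piFinset]
  apply forall_congr'
  intro j
  by_cases hj : j ∈ J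
  · rw [if_pos hj]
    by_cases hz : j = (⟨0, hm⟩ : Fin m)
    · rw [if_pos hz]; erw [Finset.mem_Ico]
      constructor
      · rintro ⟨h1, h2⟩
        refine ⟨fun _ => ⟨fun _ => ⟨?_, ?_⟩, fun h => absurd hz h⟩, fun h => absurd hj h⟩
        · exact_mod_cast h1
        · exact_mod_cast h2
      · rintro ⟨h1, -⟩
        obtain ⟨h2, h3⟩ := (h1 hj).1 hz
        exact ⟨by exact_mod_cast h2, by exact_mod_cast h3⟩
    · rw [if_neg hz]; erw [Finset.mem_Ico]
      constructor
      · rintro ⟨h1, h2⟩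
        refine ⟨fun _ => ⟨fun h => absurd h hz, fun _ => ⟨?_, ?_⟩⟩, fun h => absurd hj h⟩
        · exact_mod_cast h1
        · exact_mod_cast h2
      · rintro ⟨h1, -⟩
        obtain ⟨h2, h3⟩ := (h1 hj).2 hz
        exact ⟨by exact_mod_cast h2, by exact_mod_cast h3⟩
  · rw [if_neg hj, Finset.mem_singleton]
    constructor
    · intro h
      exact ⟨fun hh => absurd hh hj, fun _ => by rw [h]; rfl⟩
    · rintro ⟨-, h⟩
      exact PNat.coe_eq_one_iff.mp (h hj)

private lemma card_blockSet (m : ℕ) (hm : 0 < m) (J : Finset (Fin m)) (k : ℕ) :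
    (blockSet m hm J k).card = (2 ^ k) ^ J.card := by
  rw [blockSet, Fintype.card_piFinset]
  rw [← Finset.prod_mul_prod_compl J]
  have h1 : ∀ j ∈ J, (if j ∈ J then
      (if j = (⟨0, hm⟩ : Fin m) then
        Finset.Ico (⟨4 * m * 2 ^ k, by exact Nat.mul_pos (Nat.mul_pos (by norm_num) hm) (by positivity)⟩ : ℕ+)
          ⟨4 * m * 2 ^ k + 2 ^ k, by positivity⟩
      else
        Finset.Ico (⟨2 ^ k, by positivity⟩ : ℕ+) ⟨2 ^ k + 2 ^ k, by positivity⟩)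
    else {1}).card = 2 ^ k := by
    intro j hj
    rw [if_pos hj]
    by_cases hz : j = (⟨0, hm⟩ : Fin m)
    · rw [if_pos hz]; erw [PNat.card_Ico]
      simp
    · rw [if_neg hz]; erw [PNat.card_Ico]
      simp
  have h2 : ∀ j ∈ Jᶜ, (if j ∈ J then
      (if j = (⟨0, hm⟩ : Fin m) then
        Finset.Ico (⟨4 * m * 2 ^ k, by exact Nat.mul_pos (Nat.mul_pos (by norm_num) hm) (by positivity)⟩ : ℕ+)
          ⟨4 * m * 2 ^ k + 2 ^ k, by positivity⟩
      else
        Finset.Ico (⟨2 ^ k, by positivity⟩ : ℕ+) ⟨2 ^ k + 2 ^ k, by positivity⟩)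
    else {1}).card = 1 := by
    intro j hj
    rw [Finset.mem_compl] at hj
    rw [if_neg hj]
    simp
  erw [Finset.prod_congr rfl h1, Finset.prod_congr rfl h2, Finset.prod_const, Finset.prod_const,
    one_pow, mul_one]

private lemma blockSet_disjoint (m : ℕ) (hm : 0 < m) (J : Finset (Fin m)) (hJ : J.Nonempty)
    {k k' : ℕ} (hkk : k ≠ k') : Disjoint (blockSet m hm J k) (blockSet m hm J k') := by
  rw [Finset.disjoint_left]
  intro i hik hik'
  obtain ⟨j₀, hj₀⟩ := hJ
  have h1 := (mem_blockSet_iff.mp hik j₀).1 hj₀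
  have h2 := (mem_blockSet_iff.mp hik' j₀).1 hj₀
  by_cases hz : j₀ = (⟨0, hm⟩ : Fin m)
  · obtain ⟨a1, a2⟩ := h1.1 hz
    obtain ⟨a3, a4⟩ := h2.1 hz
    exact hkk (block_nat_eq (by omega : 1 ≤ 4 * m) a1 a2 a3 a4)
  · obtain ⟨a1, a2⟩ := h1.2 hz
    obtain ⟨a3, a4⟩ := h2.2 hz
    have := block_nat_eq (le_refl 1) (by omega : 1 * 2 ^ k ≤ (i j₀ : ℕ)) (by omega)
      (by omega : 1 * 2 ^ k' ≤ (i j₀ : ℕ)) (by omega)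
    exact hkk this


set_option maxHeartbeats 1000000 in
/-- Necessary condition for the convergence of a higher zeta series built from a finite
family of linear functionals with nonnegative coefficients, together with the extra
factor `|-i₁ + i₂ + ⋯ + i_m|^{a₀}` (terms where this absolute value vanishes are set
to `0`). -/
theorem zeta_series_linear_functionals_abs_necessary (m : ℕ) (hm : 0 < m)
    (L : Type*) [Fintype L]
    (c : L → Fin m → ℝ) (hc : ∀ l j, 0 ≤ c l j) (hc0 : ∀ l, ∃ j, c l j ≠ 0)
    (a : L → ℝ) (a₀ b : ℝ)
    (hsum : Summable (fun i : Fin m → ℕ+ =>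
        if |(∑ j ∈ Finset.univ.erase (⟨0, hm⟩ : Fin m), ((i j : ℕ) : ℝ))
              - ((i ⟨0, hm⟩ : ℕ) : ℝ)| = 0 then 0
        else
          |(∑ j ∈ Finset.univ.erase (⟨0, hm⟩ : Fin m), ((i j : ℕ) : ℝ))
              - ((i ⟨0, hm⟩ : ℕ) : ℝ)| ^ a₀ *
            (∏ l, (∑ j, c l j * ((i j : ℕ) : ℝ)) ^ (a l)) /
            (∑ j, ((i j : ℕ) : ℝ)) ^ b)) :
    ∀ J : Finset (Fin m), J.Nonempty →
      (J.card : ℝ) + a₀ + ∑ l ∈ Finset.univ.filter (fun l => ∃ j ∈ J, c l j ≠ 0), a l < b := by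
  classical
  intro J hJ
  by_contra hcon
  push_neg at hcon
  obtain ⟨j₀, hj₀⟩ := hJ
  have hm1 : (1 : ℝ) ≤ (m : ℝ) := by exact_mod_cast hm
  set f : (Fin m → ℕ+) → ℝ := fun i =>
    if |(∑ j ∈ Finset.univ.erase (⟨0, hm⟩ : Fin m), ((i j : ℕ) : ℝ))
          - ((i ⟨0, hm⟩ : ℕ) : ℝ)| = 0 then 0
    else
      |(∑ j ∈ Finset.univ.erase (⟨0, hm⟩ : Fin m), ((i j : ℕ) : ℝ))
          - ((i ⟨0, hm⟩ : ℕ) : ℝ)| ^ a₀ *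
        (∏ l, (∑ j, c l j * ((i j : ℕ) : ℝ)) ^ (a l)) /
        (∑ j, ((i j : ℕ) : ℝ)) ^ b with hfdef
  have hsum' : Summable f := hsum
  set LJ : Finset L := Finset.univ.filter (fun l => ∃ j ∈ J, c l j ≠ 0) with hLJ
  set A : ℝ := ∑ l ∈ LJ, a l with hA
  have hf0 : ∀ i, 0 ≤ f i := by
    intro i
    simp only [hfdef]
    split
    · exact le_refl 0
    · apply div_nonneg
      · apply mul_nonneg (Real.rpow_nonneg (abs_nonneg _) _)
        exact Finset.prod_nonneg fun l _ => Real.rpow_nonneg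
          (Finset.sum_nonneg fun j _ => mul_nonneg (hc l j) (by positivity)) _
      · exact Real.rpow_nonneg (Finset.sum_nonneg fun j _ => by positivity) _
  -- chosen index with nonzero coefficient, for l ∈ LJ
  set jl : L → Fin m := fun l => if h : ∃ j ∈ J, c l j ≠ 0 then h.choose else j₀ with hjldef
  have hjl : ∀ l ∈ LJ, jl l ∈ J ∧ 0 < c l (jl l) := by
    intro l hl
    rw [hLJ, Finset.mem_filter] at hl
    obtain ⟨-, h⟩ := hl
    simp only [hjldef, dif_pos h]
    exact ⟨h.choose_spec.1, lt_of_le_of_ne (hc l _) (Ne.symm h.choose_spec.2)⟩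
  have hsumc : ∀ l ∈ LJ, 0 < ∑ j, c l j := fun l hl =>
    lt_of_lt_of_le (hjl l hl).2 (Finset.single_le_sum (fun j _ => hc l j) (Finset.mem_univ _))
  -- constants
  set C : ℝ := 5 * (m : ℝ) * (m : ℝ) with hCdef
  have hC : 0 < C := by rw [hCdef]; nlinarith
  set εD : ℝ := min ((2 : ℝ)⁻¹ ^ a₀) (C ^ a₀) with hεDdef
  have hεDpos : 0 < εD :=
    lt_min (Real.rpow_pos_of_pos (by norm_num) _) (Real.rpow_pos_of_pos hC _)
  set maxb : ℝ := max ((1 : ℝ) ^ b) (C ^ b) with hmaxbdef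
  have hmaxbpos : 0 < maxb := lt_max_of_lt_left (Real.rpow_pos_of_pos one_pos b)
  set εS : ℝ := maxb⁻¹ with hεSdef
  have hεSpos : 0 < εS := inv_pos.mpr hmaxbpos
  set ε₁ : ℝ := ∏ l ∈ LJ,
      min ((c l (jl l)) ^ (a l)) ((5 * (m : ℝ) * ∑ j, c l j) ^ (a l)) with hε₁def
  have hε₁pos : 0 < ε₁ := Finset.prod_pos fun l hl =>
    lt_min (Real.rpow_pos_of_pos (hjl l hl).2 _)
      (Real.rpow_pos_of_pos (by nlinarith [hsumc l hl]) _)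
  set κ : L → ℝ := fun l => ∑ j, if j ∈ J then 0 else c l j with hκdef
  have hκpos : ∀ l ∉ LJ, 0 < κ l := by
    intro l hl
    have hP : ∀ j ∈ J, c l j = 0 := by
      intro j hj
      by_contra hne
      exact hl (Finset.mem_filter.mpr ⟨Finset.mem_univ l, ⟨j, hj, hne⟩⟩)
    obtain ⟨j, hj⟩ := hc0 l
    have hjJ : j ∉ J := fun h => hj (hP j h)
    calc (0 : ℝ) < c l j := (hc l j).lt_of_ne (Ne.symm hj)
      _ = (if j ∈ J then 0 else c l j) := by rw [if_neg hjJ]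
      _ ≤ κ l := Finset.single_le_sum
          (f := fun j => if j ∈ J then (0:ℝ) else c l j)
          (fun j _ => by split <;> [exact le_refl 0; exact hc l j])
          (Finset.mem_univ j)
  set ε₂ : ℝ := ∏ l ∈ LJᶜ, (κ l) ^ (a l) with hε₂def
  have hε₂pos : 0 < ε₂ := Finset.prod_pos fun l hl =>
    Real.rpow_pos_of_pos (hκpos l (Finset.mem_compl.mp hl)) _
  set ε₀ : ℝ := εD * ε₁ * ε₂ * εS with hε₀def
  have hε₀pos : 0 < ε₀ := mul_pos (mul_pos (mul_pos hεDpos hε₁pos) hε₂pos) hεSpos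
  -- the key pointwise lower bound
  have key : ∀ k : ℕ, 1 ≤ k → ∀ i ∈ blockSet m hm J k,
      ε₀ * ((2 : ℝ) ^ k) ^ (a₀ + A - b) ≤ f i := by
    intro k hk i hi
    have hN0 : (0 : ℝ) < (2 : ℝ) ^ k := by positivity
    have hN2 : (2 : ℝ) ≤ (2 : ℝ) ^ k := by
      calc (2 : ℝ) = 2 ^ 1 := (pow_one 2).symm
        _ ≤ 2 ^ k := pow_le_pow_right₀ one_le_two hk
    have hmem := mem_blockSet_iff.mp hi
    -- real-level bounds on coordinates
    have b1 : ∀ j, (1 : ℝ) ≤ ((i j : ℕ) : ℝ) := by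
      intro j
      exact_mod_cast (i j).one_le
    have b2 : ∀ j, ((i j : ℕ) : ℝ) ≤ 5 * (m : ℝ) * (2 : ℝ) ^ k := by
      intro j
      by_cases hjJ : j ∈ J
      · by_cases hjz : j = (⟨0, hm⟩ : Fin m)
        · have h2 := ((hmem j).1 hjJ).1 hjz
          have : ((i j : ℕ) : ℝ) < ((4 * m * 2 ^ k + 2 ^ k : ℕ) : ℝ) := by
            exact_mod_cast h2.2
          push_cast at this
          nlinarith
        · have h2 := ((hmem j).1 hjJ).2 hjz
          have : ((i j : ℕ) : ℝ) < ((2 ^ k + 2 ^ k : ℕ) : ℝ) := by exact_mod_cast h2.2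
          push_cast at this
          nlinarith
      · have h2 := (hmem j).2 hjJ
        have : ((i j : ℕ) : ℝ) = 1 := by exact_mod_cast h2
        rw [this]
        nlinarith
    have b3 : ∀ j ∈ J, (2 : ℝ) ^ k ≤ ((i j : ℕ) : ℝ) := by
      intro j hjJ
      by_cases hjz : j = (⟨0, hm⟩ : Fin m)
      · have h2 := ((hmem j).1 hjJ).1 hjz
        have h3 : ((4 * m * 2 ^ k : ℕ) : ℝ) ≤ ((i j : ℕ) : ℝ) := by exact_mod_cast h2.1
        push_cast at h3
        nlinarith
      · have h2 := ((hmem j).1 hjJ).2 hjz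
        have h3 : ((2 ^ k : ℕ) : ℝ) ≤ ((i j : ℕ) : ℝ) := by exact_mod_cast h2.1
        push_cast at h3
        linarith
    have b4 : ∀ j ∉ J, ((i j : ℕ) : ℝ) = 1 := by
      intro j hjJ
      exact_mod_cast (hmem j).2 hjJ
    -- sums
    have hsplit : (∑ j ∈ Finset.univ.erase (⟨0, hm⟩ : Fin m), ((i j : ℕ) : ℝ))
        + ((i (⟨0, hm⟩ : Fin m) : ℕ) : ℝ) = ∑ j, ((i j : ℕ) : ℝ) :=
      Finset.sum_erase_add _ _ (Finset.mem_univ _)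
    have hS'nonneg : 0 ≤ ∑ j ∈ Finset.univ.erase (⟨0, hm⟩ : Fin m), ((i j : ℕ) : ℝ) :=
      Finset.sum_nonneg fun j _ => by positivity
    have b6 : (2 : ℝ) ^ k ≤ ∑ j, ((i j : ℕ) : ℝ) :=
      le_trans (b3 j₀ hj₀)
        (Finset.single_le_sum (f := fun j => ((i j : ℕ) : ℝ)) (fun j _ => by positivity)
          (Finset.mem_univ j₀))
    have b7 : (∑ j, ((i j : ℕ) : ℝ)) ≤ C * (2 : ℝ) ^ k := by
      calc (∑ j, ((i j : ℕ) : ℝ)) ≤ ∑ _j : Fin m, 5 * (m : ℝ) * (2 : ℝ) ^ k :=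
            Finset.sum_le_sum fun j _ => b2 j
        _ = (m : ℝ) * (5 * (m : ℝ) * (2 : ℝ) ^ k) := by
            rw [Finset.sum_const, Finset.card_univ, Fintype.card_fin, nsmul_eq_mul]
        _ = C * (2 : ℝ) ^ k := by rw [hCdef]; ring
    -- bound on the absolute value
    have b8 : (2 : ℝ)⁻¹ * (2 : ℝ) ^ k ≤
        |(∑ j ∈ Finset.univ.erase (⟨0, hm⟩ : Fin m), ((i j : ℕ) : ℝ))
          - ((i (⟨0, hm⟩ : Fin m) : ℕ) : ℝ)| ∧
        |(∑ j ∈ Finset.univ.erase (⟨0, hm⟩ : Fin m), ((i j : ℕ) : ℝ))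
          - ((i (⟨0, hm⟩ : Fin m) : ℕ) : ℝ)| ≤ C * (2 : ℝ) ^ k := by
      constructor
      · by_cases hzJ : (⟨0, hm⟩ : Fin m) ∈ J
        · -- the z-coordinate dominates
          have hzlo : ((4 * m * 2 ^ k : ℕ) : ℝ) ≤ ((i (⟨0, hm⟩ : Fin m) : ℕ) : ℝ) := by
            exact_mod_cast (((hmem _).1 hzJ).1 rfl).1
          push_cast at hzlo
          have hS'up : (∑ j ∈ Finset.univ.erase (⟨0, hm⟩ : Fin m), ((i j : ℕ) : ℝ))
              ≤ ((m : ℝ) - 1) * (2 * (2 : ℝ) ^ k) := by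
            calc (∑ j ∈ Finset.univ.erase (⟨0, hm⟩ : Fin m), ((i j : ℕ) : ℝ))
                ≤ ∑ _j ∈ Finset.univ.erase (⟨0, hm⟩ : Fin m), (2 * (2 : ℝ) ^ k) := by
                  apply Finset.sum_le_sum
                  intro j hj
                  obtain ⟨hjne, -⟩ := Finset.mem_erase.mp hj
                  by_cases hjJ : j ∈ J
                  · have h2 := ((hmem j).1 hjJ).2 hjne
                    have : ((i j : ℕ) : ℝ) < ((2 ^ k + 2 ^ k : ℕ) : ℝ) := by
                      exact_mod_cast h2.2
                    push_cast at this
                    linarith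
                  · rw [b4 j hjJ]; linarith
              _ = ((m : ℝ) - 1) * (2 * (2 : ℝ) ^ k) := by
                  rw [Finset.sum_const, Finset.card_erase_of_mem (Finset.mem_univ _),
                    Finset.card_univ, Fintype.card_fin, nsmul_eq_mul]
                  rw [Nat.cast_sub hm]
                  norm_num
          rw [abs_sub_comm, abs_of_nonneg (by nlinarith)]
          nlinarith
        · -- z-coordinate is 1, the J-part dominates
          have hz1 : ((i (⟨0, hm⟩ : Fin m) : ℕ) : ℝ) = 1 := b4 _ hzJ
          have hj₀ne : j₀ ≠ (⟨0, hm⟩ : Fin m) := fun h => hzJ (h ▸ hj₀)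
          have hS'lo : (2 : ℝ) ^ k ≤
              ∑ j ∈ Finset.univ.erase (⟨0, hm⟩ : Fin m), ((i j : ℕ) : ℝ) :=
            le_trans (b3 j₀ hj₀)
              (Finset.single_le_sum (f := fun j => ((i j : ℕ) : ℝ)) (fun j _ => by positivity)
                (Finset.mem_erase.mpr ⟨hj₀ne, Finset.mem_univ _⟩))
          rw [hz1, abs_of_nonneg (by linarith)]
          linarith
      · have hzT : ((i (⟨0, hm⟩ : Fin m) : ℕ) : ℝ) ≤ ∑ j, ((i j : ℕ) : ℝ) := by
          have := hsplit
          linarith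
        have hS'T : (∑ j ∈ Finset.univ.erase (⟨0, hm⟩ : Fin m), ((i j : ℕ) : ℝ))
            ≤ ∑ j, ((i j : ℕ) : ℝ) := by
          have hz0 : (0:ℝ) ≤ ((i (⟨0, hm⟩ : Fin m) : ℕ) : ℝ) := by positivity
          linarith [hsplit]
        have hz0 : (0:ℝ) ≤ ((i (⟨0, hm⟩ : Fin m) : ℕ) : ℝ) := by positivity
        rw [abs_le]
        constructor <;> nlinarith [b7]
    have habs_pos : 0 < |(∑ j ∈ Finset.univ.erase (⟨0, hm⟩ : Fin m), ((i j : ℕ) : ℝ))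
        - ((i (⟨0, hm⟩ : Fin m) : ℕ) : ℝ)| := lt_of_lt_of_le (by positivity) b8.1
    -- bounds on the linear forms
    have b9 : ∀ l ∈ LJ,
        c l (jl l) * (2 : ℝ) ^ k ≤ (∑ j, c l j * ((i j : ℕ) : ℝ)) ∧
        (∑ j, c l j * ((i j : ℕ) : ℝ)) ≤ (5 * (m : ℝ) * ∑ j, c l j) * (2 : ℝ) ^ k := by
      intro l hl
      constructor
      · calc c l (jl l) * (2 : ℝ) ^ k ≤ c l (jl l) * ((i (jl l) : ℕ) : ℝ) :=
              mul_le_mul_of_nonneg_left (b3 _ (hjl l hl).1) (hc l _)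
          _ ≤ ∑ j, c l j * ((i j : ℕ) : ℝ) :=
              Finset.single_le_sum (f := fun j => c l j * ((i j : ℕ) : ℝ))
                (fun j _ => mul_nonneg (hc l j) (by positivity)) (Finset.mem_univ _)
      · calc (∑ j, c l j * ((i j : ℕ) : ℝ))
            ≤ ∑ j, c l j * (5 * (m : ℝ) * (2 : ℝ) ^ k) :=
              Finset.sum_le_sum fun j _ => mul_le_mul_of_nonneg_left (b2 j) (hc l j)
          _ = (5 * (m : ℝ) * ∑ j, c l j) * (2 : ℝ) ^ k := by
              rw [← Finset.sum_mul]
              ring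
    have b10 : ∀ l ∉ LJ, (∑ j, c l j * ((i j : ℕ) : ℝ)) = κ l := by
      intro l hl
      have hP : ∀ j ∈ J, c l j = 0 := by
        intro j hj
        by_contra hne
        exact hl (Finset.mem_filter.mpr ⟨Finset.mem_univ l, ⟨j, hj, hne⟩⟩)
      simp only [hκdef]
      apply Finset.sum_congr rfl
      intro j _
      by_cases hjJ : j ∈ J
      · rw [if_pos hjJ, hP j hjJ, zero_mul]
      · rw [if_neg hjJ, b4 j hjJ, mul_one]
    -- assemble
    have hfi : f i =
        |(∑ j ∈ Finset.univ.erase (⟨0, hm⟩ : Fin m), ((i j : ℕ) : ℝ))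
            - ((i (⟨0, hm⟩ : Fin m) : ℕ) : ℝ)| ^ a₀ *
          (∏ l, (∑ j, c l j * ((i j : ℕ) : ℝ)) ^ (a l)) *
          ((∑ j, ((i j : ℕ) : ℝ)) ^ b)⁻¹ := by
      simp only [hfdef]
      rw [if_neg (ne_of_gt habs_pos), div_eq_mul_inv]
    rw [hfi]
    have hT0 : (0 : ℝ) < ∑ j, ((i j : ℕ) : ℝ) := lt_of_lt_of_le hN0 b6
    -- three factor bounds
    have A1 : ((2 : ℝ) ^ k) ^ a₀ * εD ≤
        |(∑ j ∈ Finset.univ.erase (⟨0, hm⟩ : Fin m), ((i j : ℕ) : ℝ))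
            - ((i (⟨0, hm⟩ : Fin m) : ℕ) : ℝ)| ^ a₀ := by
      rw [hεDdef]
      exact rpow_lower_aux hN0 (by norm_num) b8.1 b8.2
    have A2 : ((2 : ℝ) ^ k) ^ A * ε₁ * ε₂ ≤ ∏ l, (∑ j, c l j * ((i j : ℕ) : ℝ)) ^ (a l) := by
      rw [← Finset.prod_mul_prod_compl LJ]
      have h2 : ε₂ = ∏ l ∈ LJᶜ, (∑ j, c l j * ((i j : ℕ) : ℝ)) ^ (a l) := by
        rw [hε₂def]
        exact Finset.prod_congr rfl fun l hl => by
          rw [b10 l (Finset.mem_compl.mp hl)]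
      have h1 : ((2 : ℝ) ^ k) ^ A * ε₁ ≤ ∏ l ∈ LJ, (∑ j, c l j * ((i j : ℕ) : ℝ)) ^ (a l) := by
        have hsum_eq : ((2 : ℝ) ^ k) ^ A = ∏ l ∈ LJ, ((2 : ℝ) ^ k) ^ (a l) := by
          rw [hA]
          exact Real.rpow_sum_of_pos hN0 a LJ
        rw [hsum_eq, hε₁def, ← Finset.prod_mul_distrib]
        apply Finset.prod_le_prod
        · intro l hl
          have := hεDpos
          apply mul_nonneg (Real.rpow_nonneg hN0.le _)
          exact le_min (Real.rpow_nonneg (hc l _) _)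
            (Real.rpow_nonneg (by nlinarith [hsumc l hl]) _)
        · intro l hl
          exact rpow_lower_aux hN0 (hjl l hl).2 (b9 l hl).1 (b9 l hl).2
      rw [h2]
      apply mul_le_mul_of_nonneg_right h1
      rw [← h2]
      exact hε₂pos.le
    have A3 : (((2 : ℝ) ^ k) ^ b * maxb)⁻¹ ≤ ((∑ j, ((i j : ℕ) : ℝ)) ^ b)⁻¹ := by
      apply inv_anti₀ (Real.rpow_pos_of_pos hT0 b)
      rw [hmaxbdef]
      exact rpow_upper_aux hN0 one_pos (by rw [one_mul]; exact b6) b7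
    -- combine
    have hEq : ε₀ * ((2 : ℝ) ^ k) ^ (a₀ + A - b) =
        (((2 : ℝ) ^ k) ^ a₀ * εD) * (((2 : ℝ) ^ k) ^ A * ε₁ * ε₂) *
          ((((2 : ℝ) ^ k) ^ b) * maxb)⁻¹ := by
      rw [hε₀def, hεSdef]
      rw [show a₀ + A - b = a₀ + A + (-b) by ring, Real.rpow_add hN0, Real.rpow_add hN0,
        Real.rpow_neg hN0.le, mul_inv]
      ring
    rw [hEq]
    apply mul_le_mul
    · exact mul_le_mul A1 A2
        (mul_pos (mul_pos (Real.rpow_pos_of_pos hN0 _) hε₁pos) hε₂pos).le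
        (Real.rpow_nonneg (abs_nonneg _) _)
    · exact A3
    · exact inv_nonneg.mpr (mul_nonneg (Real.rpow_nonneg hN0.le _) hmaxbpos.le)
    · exact mul_nonneg (Real.rpow_nonneg (abs_nonneg _) _)
        (Finset.prod_nonneg fun l _ => Real.rpow_nonneg
          (Finset.sum_nonneg fun j _ => mul_nonneg (hc l j) (by positivity)) _)
  -- sum over each block is at least ε₀
  have blocksum : ∀ k, 1 ≤ k → ε₀ ≤ ∑ i ∈ blockSet m hm J k, f i := by
    intro k hk
    have h1 : (blockSet m hm J k).card • (ε₀ * ((2 : ℝ) ^ k) ^ (a₀ + A - b)) ≤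
        ∑ i ∈ blockSet m hm J k, f i :=
      Finset.card_nsmul_le_sum _ _ _ (key k hk)
    rw [nsmul_eq_mul, card_blockSet m hm J k] at h1
    refine le_trans ?_ h1
    have hN0 : (0 : ℝ) < (2 : ℝ) ^ k := by positivity
    have hcast : ((((2 : ℕ) ^ k) ^ J.card : ℕ) : ℝ) = ((2 : ℝ) ^ k) ^ ((J.card : ℕ) : ℝ) := by
      push_cast
      rw [Real.rpow_natCast]
    rw [hcast]
    have hEq2 : ((2 : ℝ) ^ k) ^ ((J.card : ℕ) : ℝ) * (ε₀ * ((2 : ℝ) ^ k) ^ (a₀ + A - b)) =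
        ε₀ * ((2 : ℝ) ^ k) ^ (((J.card : ℕ) : ℝ) + (a₀ + A - b)) := by
      rw [Real.rpow_add hN0]
      ring
    rw [hEq2]
    nth_rewrite 1 [← mul_one ε₀]
    apply mul_le_mul_of_nonneg_left ?_ hε₀pos.le
    have hbase : (1 : ℝ) ≤ (2 : ℝ) ^ k := by
      calc (1 : ℝ) = 2 ^ 0 := (pow_zero 2).symm
        _ ≤ 2 ^ k := pow_le_pow_right₀ one_le_two (Nat.zero_le k)
    calc (1 : ℝ) = ((2 : ℝ) ^ k) ^ (0 : ℝ) := (Real.rpow_zero _).symm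
      _ ≤ ((2 : ℝ) ^ k) ^ (((J.card : ℕ) : ℝ) + (a₀ + A - b)) :=
          Real.rpow_le_rpow_of_exponent_le hbase (by linarith)
  -- conclude
  obtain ⟨K, hK⟩ := exists_nat_gt ((∑' i, f i) / ε₀)
  have hdisj : (↑(Finset.Icc 1 K) : Set ℕ).PairwiseDisjoint (blockSet m hm J) := by
    intro k _ k' _ hkk
    exact blockSet_disjoint m hm J ⟨j₀, hj₀⟩ hkk
  have hle : ∑ k ∈ Finset.Icc 1 K, ∑ i ∈ blockSet m hm J k, f i ≤ ∑' i, f i := by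
    rw [← Finset.sum_biUnion hdisj]
    exact Summable.sum_le_tsum _ (fun i _ => hf0 i) hsum'
  have hge : (K : ℝ) * ε₀ ≤ ∑ k ∈ Finset.Icc 1 K, ∑ i ∈ blockSet m hm J k, f i := by
    calc (K : ℝ) * ε₀ = ∑ _k ∈ Finset.Icc 1 K, ε₀ := by
          rw [Finset.sum_const, Nat.card_Icc, nsmul_eq_mul]
          norm_num
      _ ≤ _ := Finset.sum_le_sum fun k hk => blocksum k (Finset.mem_Icc.mp hk).1
  rw [div_lt_iff₀ hε₀pos] at hK
  linarith
end
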